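/- arXiv:1310.8365 — 8 statements merged into one kernel-verified Lean document; each statement's English description precedes it below -/
import Mathlib

section
/- Suppose S^{(k+1)}(x₀) is the first nonvanishing derivative of S at x₀ of order ≥ 2 (k ≥ 1). Then the iterated Poisson bracket H^k_{Re d}(Im d)(x,ξ), evaluated with all lower-order derivatives of S'' vanishing at x₀, equals (-2ξ)^k S^{(k+1)}(x₀) Im λ at x = x₀, and all iterated Poisson brackets of Re d and Im d of order ≤ k vanish at points (x₀, ξ). -/
open Complex

/-- The Poisson bracket `{f,g} = (∂f/∂ξ)(∂g/∂x) - (∂f/∂x)(∂g/∂ξ)`. -/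
noncomputable def poissonBracket (f g : ℝ → ℝ → ℝ) (x ξ : ℝ) : ℝ :=
  deriv (fun ξ' => f x ξ') ξ * deriv (fun x' => g x' ξ) x
    - deriv (fun x' => f x' ξ) x * deriv (fun ξ' => g x ξ') ξ

/-- Iterated Poisson bracket along a list: `bracketSeq [f₁,…,fⱼ] g = {f₁,{f₂,…,{fⱼ,g}…}}`. -/
noncomputable def bracketSeq : List (ℝ → ℝ → ℝ) → (ℝ → ℝ → ℝ) → (ℝ → ℝ → ℝ)
  | [], g => g
  | f :: l, g => poissonBracket f (bracketSeq l g)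


private lemma le_infty (i : ℕ) : (i : WithTop ℕ∞) ≤ ((⊤:ℕ∞) : WithTop ℕ∞) := by exact_mod_cast le_top

private lemma itD_add {f g : ℝ → ℝ} (hf : ContDiff ℝ (⊤:ℕ∞) f) (hg : ContDiff ℝ (⊤:ℕ∞) g) (i : ℕ) (x : ℝ) :
    iteratedDeriv i (fun y => f y + g y) x = iteratedDeriv i f x + iteratedDeriv i g x := by
  have h : (fun y => f y + g y) = f + g := rfl
  simp only [iteratedDeriv_eq_iteratedFDeriv, h]
  rw [iteratedFDeriv_add_apply (hf.of_le (le_infty i)).contDiffAt (hg.of_le (le_infty i)).contDiffAt]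
  simp

private lemma smooth_deriv {f : ℝ → ℝ} (hf : ContDiff ℝ (⊤:ℕ∞) f) : ContDiff ℝ (⊤:ℕ∞) (deriv f) :=
  (contDiff_infty_iff_deriv.mp hf).2

private lemma smooth_diff {f : ℝ → ℝ} (hf : ContDiff ℝ (⊤:ℕ∞) f) : Differentiable ℝ f :=
  (contDiff_infty_iff_deriv.mp hf).1

private lemma smooth_itD {f : ℝ → ℝ} (hf : ContDiff ℝ (⊤:ℕ∞) f) (j : ℕ) : ContDiff ℝ (⊤:ℕ∞) (iteratedDeriv j f) := by
  induction j with
  | zero => simpa [iteratedDeriv_zero] using hf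
  | succ j ih => rw [iteratedDeriv_succ]; exact smooth_deriv ih

private lemma itD_itD (i j : ℕ) (f : ℝ → ℝ) : iteratedDeriv i (iteratedDeriv j f) = iteratedDeriv (i + j) f := by
  induction i generalizing j with
  | zero => simp [iteratedDeriv_zero]
  | succ i ih =>
      rw [iteratedDeriv_succ', ← iteratedDeriv_succ, ih (j+1), show i + (j+1) = i+1+j from by omega]

private lemma itD_zero_fn (i : ℕ) (x : ℝ) : iteratedDeriv i (fun _ : ℝ => (0:ℝ)) x = 0 := by
  induction i generalizing x with
  | zero => simp
  | succ i ih => rw [iteratedDeriv_succ']; simp only [deriv_const']; exact ih x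

private lemma itD_const_mul (b : ℝ) {h : ℝ → ℝ} (hh : ContDiff ℝ (⊤:ℕ∞) h) (i : ℕ) :
    iteratedDeriv i (fun x => b * h x) = fun x => b * iteratedDeriv i h x := by
  induction i generalizing h with
  | zero => simp
  | succ i ih =>
      rw [iteratedDeriv_succ', iteratedDeriv_succ']
      have : deriv (fun x => b * h x) = fun x => b * deriv h x := by
        funext x; exact deriv_const_mul b (smooth_diff hh x)
      rw [this, ih (smooth_deriv hh)]
/-- `f` is smooth and vanishes to order `r` at `x₀`. -/
def Van (x₀ : ℝ) (r : ℕ) (f : ℝ → ℝ) : Prop :=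
  ContDiff ℝ (⊤:ℕ∞) f ∧ ∀ i < r, iteratedDeriv i f x₀ = 0

private lemma van_mono {x₀ r f} (h : Van x₀ r f) {r'} (hr : r' ≤ r) : Van x₀ r' f :=
  ⟨h.1, fun i hi => h.2 i (lt_of_lt_of_le hi hr)⟩

private lemma van_zero (x₀ r) : Van x₀ r (fun _ => 0) :=
  ⟨contDiff_const, fun i _ => itD_zero_fn i x₀⟩

private lemma van_add {x₀ r f g} (hf : Van x₀ r f) (hg : Van x₀ r g) :
    Van x₀ r (fun x => f x + g x) :=
  ⟨hf.1.add hg.1, fun i hi => by rw [itD_add hf.1 hg.1, hf.2 i hi, hg.2 i hi, add_zero]⟩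

private lemma van_deriv {x₀ r f} (hf : Van x₀ (r+1) f) : Van x₀ r (deriv f) :=
  ⟨smooth_deriv hf.1, fun i hi => by rw [← iteratedDeriv_succ']; exact hf.2 (i+1) (by omega)⟩

private lemma van_mul_right {x₀} : ∀ (r : ℕ) (f g : ℝ → ℝ), ContDiff ℝ (⊤:ℕ∞) g →
    Van x₀ r f → Van x₀ r (fun x => f x * g x) := by
  intro r
  induction r with
  | zero => intro f g hg hf; exact ⟨hf.1.mul hg, fun i hi => absurd hi (by omega)⟩
  | succ r ih =>
    intro f g hg hf
    refine ⟨hf.1.mul hg, ?_⟩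
    intro i hi
    match i with
    | 0 =>
      have h0 := hf.2 0 (by omega)
      rw [iteratedDeriv_zero] at h0 ⊢
      simp [h0]
    | i+1 =>
      rw [iteratedDeriv_succ']
      have hd : deriv (fun x => f x * g x) = fun x => deriv f x * g x + f x * deriv g x := by
        funext x; exact deriv_mul (smooth_diff hf.1 x) (smooth_diff hg x)
      rw [hd]
      have h1 : Van x₀ r (fun x => deriv f x * g x) :=
        ih (deriv f) g hg (van_deriv hf)
      have h2 : Van x₀ r (fun x => f x * deriv g x) :=
        ih f (deriv g) (smooth_deriv hg) (van_mono hf (Nat.le_succ r))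
      rw [itD_add h1.1 h2.1, h1.2 i (by omega), h2.2 i (by omega), add_zero]
/-- `g` is a polynomial in `ξ` of degree `< n` with coefficient functions `c`. -/
def PRep (n : ℕ) (c : ℕ → ℝ → ℝ) (g : ℝ → ℝ → ℝ) : Prop :=
  (∀ m, ContDiff ℝ (⊤:ℕ∞) (c m)) ∧ (∀ m, n ≤ m → c m = fun _ => 0) ∧
    ∀ x ξ, g x ξ = ∑ m ∈ Finset.range n, c m x * ξ^m

private lemma rep_mono {n c g} (h : PRep n c g) {n'} (hn : n ≤ n') : PRep n' c g := by
  refine ⟨h.1, fun m hm => h.2.1 m (le_trans hn hm), fun x ξ => ?_⟩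
  rw [h.2.2 x ξ]
  apply Finset.sum_subset (Finset.range_subset_range.mpr hn)
  intro m _ hm
  rw [h.2.1 m (by simpa using hm)]
  ring

private lemma rep_diffx {n c g} (h : PRep n c g) (ξ x : ℝ) :
    DifferentiableAt ℝ (fun x' => g x' ξ) x := by
  have : (fun x' => g x' ξ) = fun x' => ∑ m ∈ Finset.range n, c m x' * ξ^m := by
    funext x'; exact h.2.2 x' ξ
  rw [this]
  exact DifferentiableAt.fun_sum fun m _ => ((smooth_diff (h.1 m)) x).mul_const _

private lemma rep_diffxi {n c g} (h : PRep n c g) (x ξ : ℝ) :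
    DifferentiableAt ℝ (fun ξ' => g x ξ') ξ := by
  have : (fun ξ' => g x ξ') = fun ξ' => ∑ m ∈ Finset.range n, c m x * ξ'^m := by
    funext ξ'; exact h.2.2 x ξ'
  rw [this]
  exact DifferentiableAt.fun_sum fun m _ => (differentiableAt_pow m).const_mul _

/-- partial derivative in x -/
private lemma rep_derivx {n c g} (h : PRep n c g) :
    PRep n (fun m => deriv (c m)) (fun x ξ => deriv (fun x' => g x' ξ) x) := by
  refine ⟨fun m => (contDiff_infty_iff_deriv.mp (h.1 m)).2,
    fun m hm => by show deriv (c m) = _; rw [h.2.1 m hm]; funext x; simp, fun x ξ => ?_⟩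
  show deriv (fun x' => g x' ξ) x = _
  have : (fun x' => g x' ξ) = fun x' => ∑ m ∈ Finset.range n, c m x' * ξ^m := by
    funext x'; exact h.2.2 x' ξ
  rw [this, deriv_fun_sum fun m _ => ((smooth_diff (h.1 m)) x).mul_const _]
  exact Finset.sum_congr rfl fun m _ => deriv_mul_const ((smooth_diff (h.1 m)) x) _

private lemma sum_shift_deriv (n : ℕ) (c : ℕ → ℝ) (hc : c n = 0) (ξ : ℝ) :
    ∑ m ∈ Finset.range n, c m * (m * ξ^(m-1)) = ∑ m ∈ Finset.range n, ((m+1 : ℝ) * c (m+1)) * ξ^m := by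
  cases n with
  | zero => simp
  | succ n =>
    rw [Finset.sum_range_succ' (fun m => c m * (m * ξ^(m-1))) n, Finset.sum_range_succ]
    simp only [hc, Nat.cast_zero, zero_mul, mul_zero, add_zero, Nat.add_sub_cancel]
    refine Finset.sum_congr rfl fun m _ => ?_
    push_cast
    ring

/-- partial derivative in ξ -/
private lemma rep_derivxi {n c g} (h : PRep n c g) :
    PRep n (fun m x => ((m:ℝ)+1) * c (m+1) x) (fun x ξ => deriv (fun ξ' => g x ξ') ξ) := by
  refine ⟨fun m => contDiff_const.mul (h.1 (m+1)),
    fun m hm => by show (fun x => ((m:ℝ)+1) * c (m+1) x) = _; rw [h.2.1 (m+1) (by omega)]; funext x; simp, fun x ξ => ?_⟩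
  show deriv (fun ξ' => g x ξ') ξ = _
  have : (fun ξ' => g x ξ') = fun ξ' => ∑ m ∈ Finset.range n, c m x * ξ'^m := by
    funext ξ'; exact h.2.2 x ξ'
  rw [this, deriv_fun_sum fun m _ => (differentiableAt_pow m).const_mul _]
  have e1 : ∀ m ∈ Finset.range n, deriv (fun ξ' => c m x * ξ'^m) ξ = c m x * (m * ξ^(m-1)) := by
    intro m _
    rw [deriv_const_mul _ (differentiableAt_pow m), deriv_pow_field m]
  rw [Finset.sum_congr rfl e1]
  have hc : c n x = 0 := by rw [h.2.1 n (le_refl n)]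
  simpa using sum_shift_deriv n (fun m => c m x) hc ξ

private lemma rep_smulxi (a : ℝ) {n c g} (h : PRep n c g) :
    PRep (n+1) (fun m => match m with | 0 => fun _ => 0 | (m+1) => fun x => a * c m x)
      (fun x ξ => (a * ξ) * g x ξ) := by
  refine ⟨fun m => ?_, fun m hm => ?_, fun x ξ => ?_⟩
  · match m with
    | 0 => exact contDiff_const
    | m+1 => exact contDiff_const.mul (h.1 m)
  · match m with
    | 0 => rfl
    | m+1 =>
      show (fun x => a * c m x) = _
      rw [h.2.1 m (by omega)]; funext x; simp
  · beta_reduce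
    rw [h.2.2 x ξ, Finset.mul_sum, Finset.sum_range_succ']
    simp only []
    rw [zero_mul, add_zero]
    refine Finset.sum_congr rfl fun m _ => ?_
    ring

private lemma rep_mulx (p : ℝ → ℝ) (hp : ContDiff ℝ (⊤:ℕ∞) p) {n c g} (h : PRep n c g) :
    PRep n (fun m x => p x * c m x) (fun x ξ => p x * g x ξ) := by
  refine ⟨fun m => hp.mul (h.1 m), fun m hm => ?_, fun x ξ => ?_⟩
  · show (fun x => p x * c m x) = _; rw [h.2.1 m hm]; funext x; simp
  · beta_reduce
    rw [h.2.2 x ξ, Finset.mul_sum]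
    exact Finset.sum_congr rfl fun m _ => by ring

private lemma rep_sub {n c g n' c' g'} (h : PRep n c g) (h' : PRep n' c' g') :
    PRep (max n n') (fun m x => c m x - c' m x) (fun x ξ => g x ξ - g' x ξ) := by
  have h1 := rep_mono h (le_max_left n n')
  have h2 := rep_mono h' (le_max_right n n')
  refine ⟨fun m => (h.1 m).sub (h'.1 m), fun m hm => ?_, fun x ξ => ?_⟩
  · show (fun x => c m x - c' m x) = _
    rw [h1.2.1 m hm, h2.2.1 m hm]; funext x; simp
  · beta_reduce
    rw [h1.2.2 x ξ, h2.2.2 x ξ, ← Finset.sum_sub_distrib]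
    exact Finset.sum_congr rfl fun m _ => by ring

private lemma rep_add {n c g n' c' g'} (h : PRep n c g) (h' : PRep n' c' g') :
    PRep (max n n') (fun m x => c m x + c' m x) (fun x ξ => g x ξ + g' x ξ) := by
  have h1 := rep_mono h (le_max_left n n')
  have h2 := rep_mono h' (le_max_right n n')
  refine ⟨fun m => (h.1 m).add (h'.1 m), fun m hm => ?_, fun x ξ => ?_⟩
  · show (fun x => c m x + c' m x) = _
    rw [h1.2.1 m hm, h2.2.1 m hm]; funext x; simp
  · beta_reduce
    rw [h1.2.2 x ξ, h2.2.2 x ξ, ← Finset.sum_add_distrib]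
    exact Finset.sum_congr rfl fun m _ => by ring

private lemma rep_single (q : ℝ → ℝ) (hq : ContDiff ℝ (⊤:ℕ∞) q) {e n : ℕ} (he : e < n) :
    PRep n (fun m => if m = e then q else fun _ => 0) (fun x ξ => q x * ξ^e) := by
  refine ⟨fun m => ?_, fun m hm => ?_, fun x ξ => ?_⟩
  · by_cases h : m = e <;> simp [h, hq, contDiff_const]
  · have : m ≠ e := by omega
    simp [this]
  · rw [Finset.sum_eq_single e]
    · simp
    · intro m _ hme; simp [hme]
    · intro h; exact absurd (Finset.mem_range.mpr he) h

private lemma rep_congr {n c g g'} (h : PRep n c g) (hgg : ∀ x ξ, g x ξ = g' x ξ) : PRep n c g' :=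
  ⟨h.1, h.2.1, fun x ξ => by rw [← hgg x ξ]; exact h.2.2 x ξ⟩

private lemma itD_sub {f g : ℝ → ℝ} (hf : ContDiff ℝ (⊤:ℕ∞) f) (hg : ContDiff ℝ (⊤:ℕ∞) g) (i : ℕ) (x : ℝ) :
    iteratedDeriv i (fun y => f y - g y) x = iteratedDeriv i f x - iteratedDeriv i g x := by
  have h : (fun y => f y - g y) = fun y => f y + (-1) * g y := by funext y; ring
  rw [h, itD_add hf (contDiff_const.mul hg), itD_const_mul (-1) hg]
  ring

private lemma van_sub {x₀ r f g} (hf : Van x₀ r f) (hg : Van x₀ r g) :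
    Van x₀ r (fun x => f x - g x) :=
  ⟨hf.1.sub hg.1, fun i hi => by rw [itD_sub hf.1 hg.1, hf.2 i hi, hg.2 i hi, sub_zero]⟩

private lemma van_const_mul {x₀ r t} (a : ℝ) (h : Van x₀ r t) : Van x₀ r (fun x => a * t x) := by
  have := van_mul_right r t (fun _ => a) contDiff_const h
  simpa [mul_comm] using this

private lemma van_mul_left {x₀ r} (p q : ℝ → ℝ) (hp : ContDiff ℝ (⊤:ℕ∞) p) (hq : Van x₀ r q) :
    Van x₀ r (fun x => p x * q x) := by
  have := van_mul_right r q p hp hq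
  simpa [mul_comm] using this

/-- smooth polynomial in ξ whose coefficients vanish to order r at x₀ -/
def NiceV (x₀ : ℝ) (r : ℕ) (g : ℝ → ℝ → ℝ) : Prop :=
  ∃ n c, PRep n c g ∧ ∀ m, Van x₀ r (c m)

private lemma niceV_mono {x₀ r g} (h : NiceV x₀ r g) {r'} (hr : r' ≤ r) : NiceV x₀ r' g := by
  obtain ⟨n, c, h1, h2⟩ := h
  exact ⟨n, c, h1, fun m => van_mono (h2 m) hr⟩

private lemma niceV_eval {x₀ r g} (h : NiceV x₀ r g) (hr : 1 ≤ r) (ξ : ℝ) : g x₀ ξ = 0 := by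
  obtain ⟨n, c, h1, h2⟩ := h
  rw [h1.2.2 x₀ ξ]
  refine Finset.sum_eq_zero fun m _ => ?_
  have := (h2 m).2 0 (by omega)
  rw [iteratedDeriv_zero] at this
  rw [this, zero_mul]

private lemma niceV_add {x₀ r g g'} (h : NiceV x₀ r g) (h' : NiceV x₀ r g') :
    NiceV x₀ r (fun x ξ => g x ξ + g' x ξ) := by
  obtain ⟨n, c, h1, h2⟩ := h
  obtain ⟨n', c', h1', h2'⟩ := h'
  exact ⟨max n n', _, rep_add h1 h1', fun m => van_add (h2 m) (h2' m)⟩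

private lemma niceV_single {x₀ r} (q : ℝ → ℝ) (hq : Van x₀ r q) (e : ℕ) :
    NiceV x₀ r (fun x ξ => q x * ξ^e) := by
  refine ⟨e+1, _, rep_single q hq.1 (Nat.lt_succ_self e), fun m => ?_⟩
  by_cases h : m = e
  · simpa [h] using hq
  · simpa [h] using van_zero x₀ r

/-- The bracket of `f` (whose partials are `a·ξ` and `p`) with a polynomial `g`. -/
private lemma pb_formula {a : ℝ} {p : ℝ → ℝ} {f g : ℝ → ℝ → ℝ} {n c}
    (hfξ : ∀ x ξ, deriv (fun ξ' => f x ξ') ξ = a * ξ)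
    (hfx : ∀ x ξ, deriv (fun x' => f x' ξ) x = p x)
    (h : PRep n c g) :
    ∀ x ξ, poissonBracket f g x ξ
      = (a * ξ) * (fun x ξ => deriv (fun x' => g x' ξ) x) x ξ
        - p x * (fun x ξ => deriv (fun ξ' => g x ξ') ξ) x ξ := by
  intro x ξ
  simp only [poissonBracket, hfξ, hfx]

private lemma niceV_pb_re {x₀ : ℝ} {a : ℝ} {p : ℝ → ℝ} {f : ℝ → ℝ → ℝ}
    (hp : ContDiff ℝ (⊤:ℕ∞) p)
    (hfξ : ∀ x ξ, deriv (fun ξ' => f x ξ') ξ = a * ξ)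
    (hfx : ∀ x ξ, deriv (fun x' => f x' ξ) x = p x)
    {r : ℕ} {g : ℝ → ℝ → ℝ} (h : NiceV x₀ (r+1) g) :
    NiceV x₀ r (poissonBracket f g) := by
  obtain ⟨n, c, h1, h2⟩ := h
  have hDx := rep_derivx h1
  have hDξ := rep_derivxi h1
  have hA := rep_smulxi a hDx
  have hB := rep_mulx p hp hDξ
  have hsub := rep_sub hA hB
  refine ⟨_, _, rep_congr hsub (fun x ξ => (pb_formula hfξ hfx h1 x ξ).symm), fun m => ?_⟩
  refine van_sub ?_ ?_
  · match m with
    | 0 => exact van_zero x₀ r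
    | m+1 => exact van_const_mul a (van_deriv (h2 m))
  · exact van_mul_left p _ hp (van_const_mul _ (van_mono (h2 (m+1)) (Nat.le_succ r)))

private lemma niceV_pb_im {x₀ : ℝ} {p : ℝ → ℝ} {f : ℝ → ℝ → ℝ} {rp : ℕ}
    (hpv : Van x₀ rp p)
    (hfξ : ∀ x ξ, deriv (fun ξ' => f x ξ') ξ = (0:ℝ) * ξ)
    (hfx : ∀ x ξ, deriv (fun x' => f x' ξ) x = p x)
    {g : ℝ → ℝ → ℝ} (h : NiceV x₀ 0 g) :
    NiceV x₀ rp (poissonBracket f g) := by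
  obtain ⟨n, c, h1, h2⟩ := h
  have hDx := rep_derivx h1
  have hDξ := rep_derivxi h1
  have hA := rep_smulxi 0 hDx
  have hB := rep_mulx p hpv.1 hDξ
  have hsub := rep_sub hA hB
  refine ⟨_, _, rep_congr hsub (fun x ξ => (pb_formula hfξ hfx h1 x ξ).symm), fun m => ?_⟩
  refine van_sub ?_ ?_
  · match m with
    | 0 => exact van_zero x₀ rp
    | m+1 =>
      exact van_mul_right rp (fun _ => 0) _ ((contDiff_infty_iff_deriv.mp (h1.1 m)).2) (van_zero x₀ rp)
  · exact van_mul_right rp p _ (contDiff_const.mul (h1.1 (m+1))) hpv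

private lemma pb_eval (f g : ℝ → ℝ → ℝ) (x ξ : ℝ) :
    poissonBracket f g x ξ = deriv (fun ξ' => f x ξ') ξ * deriv (fun x' => g x' ξ) x
      - deriv (fun x' => f x' ξ) x * deriv (fun ξ' => g x ξ') ξ := rfl

private lemma pb_self (f : ℝ → ℝ → ℝ) : poissonBracket f f = fun _ _ => 0 := by
  funext x ξ; rw [pb_eval]; ring

private lemma pb_zero (f : ℝ → ℝ → ℝ) : poissonBracket f (fun _ _ => 0) = fun _ _ => 0 := by
  funext x ξ; rw [pb_eval]
  simp

private lemma bs_zero : ∀ l : List (ℝ → ℝ → ℝ), bracketSeq l (fun _ _ => 0) = fun _ _ => 0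
  | [] => rfl
  | f :: l => by rw [bracketSeq, bs_zero l, pb_zero]

private lemma bs_append : ∀ (l₁ l₂ : List (ℝ → ℝ → ℝ)) (g : ℝ → ℝ → ℝ),
    bracketSeq (l₁ ++ l₂) g = bracketSeq l₁ (bracketSeq l₂ g)
  | [], l₂, g => rfl
  | f :: l₁, l₂, g => by rw [List.cons_append, bracketSeq, bs_append l₁ l₂ g, bracketSeq]

private lemma niceV_zfn (x₀ : ℝ) (r : ℕ) : NiceV x₀ r (fun _ _ => 0) := by
  refine ⟨0, fun _ => fun _ => 0, ⟨fun m => contDiff_const, fun m _ => rfl, fun x ξ => by simp⟩,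
    fun m => van_zero x₀ r⟩

/-- bracket with a smooth-coefficient polynomial stays one (no vanishing claimed) -/
private lemma niceV_pb0 {x₀ : ℝ} {a : ℝ} {p : ℝ → ℝ} {f : ℝ → ℝ → ℝ}
    (hp : ContDiff ℝ (⊤:ℕ∞) p)
    (hfξ : ∀ x ξ, deriv (fun ξ' => f x ξ') ξ = a * ξ)
    (hfx : ∀ x ξ, deriv (fun x' => f x' ξ) x = p x)
    {g : ℝ → ℝ → ℝ} (h : NiceV x₀ 0 g) :
    NiceV x₀ 0 (poissonBracket f g) := by
  obtain ⟨n, c, h1, h2⟩ := h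
  have hsub := rep_sub (rep_smulxi a (rep_derivx h1)) (rep_mulx p hp (rep_derivxi h1))
  refine ⟨_, _, rep_congr hsub (fun x ξ => (pb_formula hfξ hfx h1 x ξ).symm), fun m => ?_⟩
  refine ⟨ContDiff.sub ?_ ?_, fun i hi => absurd hi (by omega)⟩
  · match m with
    | 0 => exact contDiff_const
    | m+1 => exact contDiff_const.mul (contDiff_infty_iff_deriv.mp (h1.1 m)).2
  · exact hp.mul (contDiff_const.mul (h1.1 (m+1)))

theorem stmt_2 (A S : ℝ → ℝ) (hA : ContDiff ℝ (⊤ : ℕ∞) A) (hS : ContDiff ℝ (⊤ : ℕ∞) S) (lam : ℂ)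
    (x₀ : ℝ) (k : ℕ) (hk : 1 ≤ k)
    (hvanish : ∀ j, 2 ≤ j → j ≤ k → iteratedDeriv j S x₀ = 0)
    (hnonzero : iteratedDeriv (k + 1) S x₀ ≠ 0)
    (d : ℝ → ℝ → ℂ)
    (hd : ∀ x ξ, d x ξ = -(ξ : ℂ)^2 + ((deriv S x / 2 : ℝ) + lam)^2 + ((A x : ℝ) : ℂ)^2)
    (dRe dIm : ℝ → ℝ → ℝ)
    (hdRe : dRe = fun x ξ => (d x ξ).re) (hdIm : dIm = fun x ξ => (d x ξ).im) :
    (∀ ξ : ℝ, bracketSeq (List.replicate k dRe) dIm x₀ ξ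
        = (-2 * ξ)^k * iteratedDeriv (k + 1) S x₀ * lam.im)
    ∧ (∀ (l : List (ℝ → ℝ → ℝ)) (g : ℝ → ℝ → ℝ),
        (∀ f ∈ l, f = dRe ∨ f = dIm) → (g = dRe ∨ g = dIm) →
        1 ≤ l.length → l.length ≤ k →
        ¬(l = List.replicate k dRe ∧ g = dIm) →
        ¬(l = List.replicate (k - 1) dRe ++ [dIm] ∧ g = dRe) →
        ∀ ξ : ℝ, bracketSeq l g x₀ ξ = 0) := by
  have hAt : ContDiff ℝ (⊤:ℕ∞) A := hA.of_le (by simp)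
  have hSt : ContDiff ℝ (⊤:ℕ∞) S := hS.of_le (by simp)
  have hS1 : ContDiff ℝ (⊤:ℕ∞) (deriv S) := smooth_deriv hSt
  have hS2 : ContDiff ℝ (⊤:ℕ∞) (deriv (deriv S)) := smooth_deriv hS1
  have hA1 : ContDiff ℝ (⊤:ℕ∞) (deriv A) := smooth_deriv hAt
  set P : ℝ → ℝ := fun x => (deriv S x / 2 + lam.re) * deriv (deriv S) x + 2 * A x * deriv A x
    with hPdef
  set w : ℝ → ℝ := fun x => lam.im * deriv (deriv S) x with hwdef
  set M : ℕ → ℝ → ℝ := fun j x => lam.im * iteratedDeriv j (deriv S) x with hMdef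
  have hP : ContDiff ℝ (⊤:ℕ∞) P :=
    (((hS1.div_const 2).add contDiff_const).mul hS2).add ((contDiff_const.mul hAt).mul hA1)
  -- pointwise formulas for dRe, dIm
  have hdRe' : ∀ x ξ, dRe x ξ
      = ((deriv S x / 2 + lam.re)^2 - lam.im^2 + (A x)^2) + (-1) * ξ^2 := by
    intro x ξ
    rw [hdRe]
    show (d x ξ).re = _
    rw [hd x ξ]
    simp [pow_two, Complex.add_re, Complex.mul_re, Complex.add_im, Complex.mul_im,
      Complex.ofReal_re, Complex.ofReal_im, Complex.neg_re, Complex.neg_im]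
    ring
  have hdIm' : ∀ x ξ, dIm x ξ = lam.im * deriv S x + 2 * lam.re * lam.im := by
    intro x ξ
    rw [hdIm]
    show (d x ξ).im = _
    rw [hd x ξ]
    simp [pow_two, Complex.add_re, Complex.mul_re, Complex.add_im, Complex.mul_im,
      Complex.ofReal_re, Complex.ofReal_im, Complex.neg_re, Complex.neg_im]
    ring
  -- partial derivatives of dRe and dIm
  have hReξ : ∀ x ξ, deriv (fun ξ' => dRe x ξ') ξ = (-2) * ξ := by
    intro x ξ
    have h1 : (fun ξ' => dRe x ξ') = fun ξ' =>
        ((deriv S x / 2 + lam.re)^2 - lam.im^2 + (A x)^2) + (-1) * ξ'^2 := by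
      funext ξ'; exact hdRe' x ξ'
    rw [h1, deriv_const_add, deriv_const_mul _ (differentiableAt_pow 2), deriv_pow_field 2]
    push_cast; ring
  have hRex : ∀ x ξ, deriv (fun x' => dRe x' ξ) x = P x := by
    intro x ξ
    have h1 : (fun x' => dRe x' ξ) = fun x' =>
        ((deriv S x' / 2 + lam.re)^2 - lam.im^2 + (A x')^2) + (-1) * ξ^2 := by
      funext x'; exact hdRe' x' ξ
    rw [h1]
    have hu : HasDerivAt (fun x' => deriv S x' / 2 + lam.re) (deriv (deriv S) x / 2) x :=
      ((smooth_diff hS1 x).hasDerivAt.div_const 2).add_const _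
    have hAx : HasDerivAt (fun x' => A x') (deriv A x) x := (smooth_diff hAt x).hasDerivAt
    have := ((((hu.pow 2).sub_const (lam.im^2)).add (hAx.pow 2)).add_const ((-1) * ξ^2)).deriv
    refine this.trans ?_; rw [hPdef]
    push_cast; ring
  have hImξ : ∀ x ξ, deriv (fun ξ' => dIm x ξ') ξ = (0:ℝ) * ξ := by
    intro x ξ
    have h1 : (fun ξ' => dIm x ξ') = fun _ => lam.im * deriv S x + 2 * lam.re * lam.im := by
      funext ξ'; exact hdIm' x ξ'
    rw [h1, deriv_const]; ring
  have hImx : ∀ x ξ, deriv (fun x' => dIm x' ξ) x = w x := by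
    intro x ξ
    have h1 : (fun x' => dIm x' ξ) = fun x' => lam.im * deriv S x' + 2 * lam.re * lam.im := by
      funext x'; exact hdIm' x' ξ
    rw [h1]
    have := (((smooth_diff hS1 x).hasDerivAt.const_mul lam.im).add_const (2 * lam.re * lam.im)).deriv
    rw [this, hwdef]
  -- vanishing facts
  have hM1w : M 1 = w := by
    funext x; rw [hMdef, hwdef]; simp [iteratedDeriv_one]
  have hMsm : ∀ j, ContDiff ℝ (⊤:ℕ∞) (M j) := fun j =>
    contDiff_const.mul (smooth_itD hS1 j)
  have hMderiv : ∀ j, deriv (M j) = M (j+1) := by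
    intro j
    funext x
    rw [hMdef]
    simp only []
    rw [deriv_const_mul _ (smooth_diff (smooth_itD hS1 j) x), ← iteratedDeriv_succ]
  have hMvan : ∀ j, 1 ≤ j → Van x₀ (k - j) (M j) := by
    intro j hj
    refine ⟨hMsm j, fun i hi => ?_⟩
    have hMj : M j = fun x => lam.im * iteratedDeriv j (deriv S) x := rfl
    have h2 : iteratedDeriv i (iteratedDeriv j (deriv S)) x₀ = iteratedDeriv (i + j + 1) S x₀ := by
      rw [itD_itD i j (deriv S), ← iteratedDeriv_succ']
    rw [hMj, itD_const_mul lam.im (smooth_itD hS1 j) i]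
    beta_reduce
    rw [h2, hvanish (i + j + 1) (by omega) (by omega), mul_zero]
  have hwvan : Van x₀ (k - 1) w := hM1w ▸ hMvan 1 (le_refl 1)
  -- polynomial representations of dRe and dIm
  have repRe : NiceV x₀ 0 dRe := by
    refine ⟨3, fun m => if m = 0 then (fun x => (deriv S x / 2 + lam.re)^2 - lam.im^2 + (A x)^2)
      else if m = 2 then (fun _ => (-1:ℝ)) else fun _ => 0, ⟨fun m => ?_, fun m hm => ?_, fun x ξ => ?_⟩,
      fun m => ⟨?_, fun i hi => absurd hi (by omega)⟩⟩
    · match m with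
      | 0 =>
        simpa using ((((hS1.div_const 2).add contDiff_const).pow 2).sub contDiff_const).add (hAt.pow 2)
      | 1 => simpa using contDiff_const
      | 2 => simpa using contDiff_const
      | (n+3) =>
        beta_reduce
        rw [if_neg (by omega), if_neg (by omega)]
        exact contDiff_const
    · have h0 : m ≠ 0 := by omega
      have h2 : m ≠ 2 := by omega
      simp [h0, h2]
    · rw [hdRe' x ξ]
      rw [Finset.sum_range_succ, Finset.sum_range_succ, Finset.sum_range_succ, Finset.sum_range_zero]
      norm_num
    · match m with
      | 0 =>
        simpa using ((((hS1.div_const 2).add contDiff_const).pow 2).sub contDiff_const).add (hAt.pow 2)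
      | 1 => simpa using contDiff_const
      | 2 => simpa using contDiff_const
      | (n+3) =>
        beta_reduce
        rw [if_neg (by omega), if_neg (by omega)]
        exact contDiff_const
  have repIm : NiceV x₀ 0 dIm := by
    refine ⟨1, fun m => if m = 0 then (fun x => lam.im * deriv S x + 2 * lam.re * lam.im)
      else fun _ => 0, ⟨fun m => ?_, fun m hm => ?_, fun x ξ => ?_⟩,
      fun m => ⟨?_, fun i hi => absurd hi (by omega)⟩⟩
    · match m with
      | 0 => simpa using (contDiff_const.mul hS1).add contDiff_const
      | (n+1) =>
        beta_reduce
        rw [if_neg (by omega)]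
        exact contDiff_const
    · have h0 : m ≠ 0 := by omega
      simp [h0]
    · rw [hdIm' x ξ]
      rw [Finset.sum_range_succ, Finset.sum_range_zero]
      norm_num
    · match m with
      | 0 => simpa using (contDiff_const.mul hS1).add contDiff_const
      | (n+1) =>
        beta_reduce
        rw [if_neg (by omega)]
        exact contDiff_const
  -- specialized bracket operators
  have nice_pb_dRe : ∀ {r : ℕ} {g : ℝ → ℝ → ℝ}, NiceV x₀ (r+1) g → NiceV x₀ r (poissonBracket dRe g) :=
    fun {r g} h => niceV_pb_re hP hReξ hRex h
  have nice_pb_dRe0 : ∀ {g : ℝ → ℝ → ℝ}, NiceV x₀ 0 g → NiceV x₀ 0 (poissonBracket dRe g) :=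
    fun {g} h => niceV_pb0 hP hReξ hRex h
  have nice_pb_dIm : ∀ {g : ℝ → ℝ → ℝ}, NiceV x₀ 0 g → NiceV x₀ (k-1) (poissonBracket dIm g) :=
    fun {g} h => niceV_pb_im hwvan hImξ hImx h
  have nice_pb_dIm0 : ∀ {g : ℝ → ℝ → ℝ}, NiceV x₀ 0 g → NiceV x₀ 0 (poissonBracket dIm g) :=
    fun {g} h => niceV_pb0 hwvan.1 hImξ hImx h
  have nice_pb_dRe_pred : ∀ {s : ℕ} {g : ℝ → ℝ → ℝ}, NiceV x₀ s g → NiceV x₀ (s-1) (poissonBracket dRe g) := by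
    intro s g h
    match s with
    | 0 => exact nice_pb_dRe0 h
    | s+1 => exact nice_pb_dRe h
  -- iterating the dRe bracket
  have hIter : ∀ (r : ℕ) (g : ℝ → ℝ → ℝ) (rr : ℕ), NiceV x₀ rr g →
      NiceV x₀ (rr - r) (bracketSeq (List.replicate r dRe) g) := by
    intro r
    induction r with
    | zero => intro g rr h; simpa [bracketSeq] using h
    | succ r ih =>
      intro g rr h
      rw [List.replicate_succ]
      show NiceV x₀ (rr - (r+1)) (poissonBracket dRe (bracketSeq (List.replicate r dRe) g))
      have h2 := ih g rr h
      have h3 := nice_pb_dRe_pred h2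
      have : rr - r - 1 = rr - (r+1) := by omega
      rwa [this] at h3
  -- all words built from dRe, dIm are polynomials
  have hPolyBS : ∀ (l : List (ℝ → ℝ → ℝ)) (g : ℝ → ℝ → ℝ), (∀ f ∈ l, f = dRe ∨ f = dIm) →
      NiceV x₀ 0 g → NiceV x₀ 0 (bracketSeq l g) := by
    intro l
    induction l with
    | nil => intro g _ h; exact h
    | cons f t ih =>
      intro g hmem h
      show NiceV x₀ 0 (poissonBracket f (bracketSeq t g))
      have ht := ih g (fun f hf => hmem f (List.mem_cons_of_mem _ hf)) h
      rcases hmem f (List.mem_cons_self) with h1 | h1 <;> rw [h1]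
      · exact nice_pb_dRe0 ht
      · exact nice_pb_dIm0 ht
  -- the basic bracket {Re, Im}
  have hpbReIm : poissonBracket dRe dIm = fun x ξ => ((-2) * w x) * ξ^1 := by
    funext x ξ
    rw [pb_eval, hReξ, hRex, hImξ, hImx]
    ring
  have nice_pbReIm : NiceV x₀ (k-1) (poissonBracket dRe dIm) := by
    rw [hpbReIm]
    exact niceV_single _ (van_const_mul (-2) hwvan) 1
  -- Part 1 induction
  have hMain : ∀ j, 1 ≤ j → j ≤ k → ∃ e, NiceV x₀ (k - j + 1) e ∧
      ∀ x ξ, bracketSeq (List.replicate j dRe) dIm x ξ = ((-2:ℝ)^j * M j x) * ξ^j + e x ξ := by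
    intro j hj1
    induction j, hj1 using Nat.le_induction with
    | base =>
      intro _
      refine ⟨fun _ _ => 0, niceV_zfn x₀ _, fun x ξ => ?_⟩
      rw [List.replicate_one]
      show poissonBracket dRe dIm x ξ = _
      rw [hpbReIm, hM1w]
      beta_reduce
      ring
    | succ j hj ih =>
      intro hjk
      obtain ⟨e, he, heq⟩ := ih (by omega)
      have hfun : bracketSeq (List.replicate j dRe) dIm
          = fun x ξ => ((-2:ℝ)^j * M j x) * ξ^j + e x ξ :=
        funext fun x => funext fun ξ => heq x ξ
      obtain ⟨n, c, hrep, hvanc⟩ := he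
      refine ⟨fun x ξ => (P x * (((-2:ℝ)^j * (j:ℝ)) * M j x) * (-1)) * ξ^(j-1)
        + poissonBracket dRe e x ξ, ?_, ?_⟩
      · have hq : Van x₀ (k-j) (fun x => P x * (((-2:ℝ)^j * (j:ℝ)) * M j x) * (-1)) :=
          van_mul_right (k-j) _ (fun _ => (-1:ℝ)) contDiff_const
            (van_mul_left P _ hP (van_const_mul _ (hMvan j hj)))
        have h1 : NiceV x₀ (k-j) (fun x ξ =>
            (P x * (((-2:ℝ)^j * (j:ℝ)) * M j x) * (-1)) * ξ^(j-1)) :=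
          niceV_single _ hq (j-1)
        have h2 : NiceV x₀ (k-j) (poissonBracket dRe e) := by
          apply nice_pb_dRe
          have : k - j + 1 = (k - j) + 1 := rfl
          exact ⟨n, c, hrep, hvanc⟩
        have h3 := niceV_add h1 h2
        have hkj : k - (j+1) + 1 = k - j := by omega
        rwa [hkj]
      · intro x ξ
        have hM1 : HasDerivAt (M j) (M (j+1) x) x := by
          have h0 := (smooth_diff (hMsm j) x).hasDerivAt
          rwa [congrFun (hMderiv j) x] at h0
        have hMx : HasDerivAt (fun x' => ((-2:ℝ)^j * M j x') * ξ^j)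
            (((-2:ℝ)^j * M (j+1) x) * ξ^j) x := (hM1.const_mul _).mul_const _
        have hDx : deriv (fun x' => ((-2:ℝ)^j * M j x') * ξ^j + e x' ξ) x
            = ((-2:ℝ)^j * M (j+1) x) * ξ^j + deriv (fun x' => e x' ξ) x := by
          rw [deriv_fun_add hMx.differentiableAt (rep_diffx hrep ξ x), hMx.deriv]
        have hDξ : deriv (fun ξ' => ((-2:ℝ)^j * M j x) * ξ'^j + e x ξ') ξ
            = ((-2:ℝ)^j * M j x) * ((j:ℝ) * ξ^(j-1)) + deriv (fun ξ' => e x ξ') ξ := by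
          rw [deriv_fun_add ((differentiableAt_pow j).const_mul _) (rep_diffxi hrep x ξ),
            deriv_const_mul _ (differentiableAt_pow j), deriv_pow_field j]
        have hpbe : poissonBracket dRe e x ξ
            = -2*ξ * deriv (fun x' => e x' ξ) x - P x * deriv (fun ξ' => e x ξ') ξ := by
          rw [pb_eval, hReξ, hRex]
        rw [List.replicate_succ]
        show poissonBracket dRe (bracketSeq (List.replicate j dRe) dIm) x ξ = _
        rw [hfun, pb_eval, hReξ, hRex]
        beta_reduce
        rw [hDx, hDξ, hpbe]
        ring
  constructor
  · -- part 1 conclusion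
    intro ξ
    obtain ⟨e, he, heq⟩ := hMain k hk (le_refl k)
    have h0 : e x₀ ξ = 0 := niceV_eval he (by omega) ξ
    rw [heq x₀ ξ, h0, add_zero]
    have hMk : M k x₀ = lam.im * iteratedDeriv (k+1) S x₀ := by
      show lam.im * iteratedDeriv k (deriv S) x₀ = _
      rw [← iteratedDeriv_succ']
    rw [hMk, mul_pow]
    ring
  · -- part 2
    intro l g hl hg hlen1 hlenk hex1 hex2 ξ
    have hsplit : ∀ (l : List (ℝ → ℝ → ℝ)), (∀ f ∈ l, f = dRe ∨ f = dIm) →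
        ∃ r rest, l = List.replicate r dRe ++ rest ∧ (rest = [] ∨ ∃ rest', rest = dIm :: rest') := by
      intro l
      induction l with
      | nil => exact fun _ => ⟨0, [], rfl, Or.inl rfl⟩
      | cons f t ih =>
        intro hmem
        rcases hmem f (List.mem_cons_self) with h1 | h1
        · obtain ⟨r, rest, heq, hcc⟩ := ih (fun f hf => hmem f (List.mem_cons_of_mem _ hf))
          exact ⟨r+1, rest, by rw [List.replicate_succ, List.cons_append, ← heq, h1], hcc⟩
        · exact ⟨0, f :: t, rfl, Or.inr ⟨t, by rw [h1]⟩⟩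
    obtain ⟨r, rest, hlr, hcase⟩ := hsplit l hl
    have hg0 : NiceV x₀ 0 g := by
      rcases hg with h|h
      · rw [h]; exact repRe
      · rw [h]; exact repIm
    rcases hcase with hrest | ⟨rest', hrest⟩
    · have hlr' : l = List.replicate r dRe := by rw [hlr, hrest, List.append_nil]
      have hrlen : l.length = r := by rw [hlr']; simp
      rcases hg with hgr | hgi
      · have hz : ∀ r, 1 ≤ r → bracketSeq (List.replicate r dRe) dRe = fun _ _ => 0 := by
          intro r hr
          induction r with
          | zero => omega
          | succ r ihz =>
            rw [List.replicate_succ]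
            show poissonBracket dRe (bracketSeq (List.replicate r dRe) dRe) = _
            rcases Nat.eq_zero_or_pos r with h0 | h0
            · subst h0
              show poissonBracket dRe dRe = _
              exact pb_self dRe
            · rw [ihz h0, pb_zero]
        rw [hlr', hgr, hz r (by omega)]
      · have hrk : r ≠ k := fun h => hex1 ⟨by rw [hlr', h], hgi⟩
        have hbs2 : bracketSeq l g
            = bracketSeq (List.replicate (r-1) dRe) (poissonBracket dRe dIm) := by
          rw [hlr', hgi]
          have hrr : List.replicate r dRe = List.replicate (r-1) dRe ++ [dRe] := by
            rw [← List.replicate_succ']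
            congr 1
            omega
          rw [hrr, bs_append]
          rfl
        rw [hbs2]
        have h1 := hIter (r-1) _ (k-1) nice_pbReIm
        exact niceV_eval h1 (by omega) ξ
    · have hlr2 : l = List.replicate r dRe ++ dIm :: rest' := by rw [hlr, hrest]
      have hmem' : ∀ f ∈ rest', f = dRe ∨ f = dIm := by
        intro f hf
        exact hl f (by rw [hlr2]; exact List.mem_append_right _ (List.mem_cons_of_mem _ hf))
      have hbs : bracketSeq l g
          = bracketSeq (List.replicate r dRe) (poissonBracket dIm (bracketSeq rest' g)) := by
        rw [hlr2, bs_append]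
        rfl
      have hlenle : r + 1 + rest'.length ≤ k := by
        have : l.length = r + (rest'.length + 1) := by rw [hlr2]; simp
        omega
      by_cases hre : rest' = []
      · subst hre
        rcases hg with hgr | hgi
        · have hrk : r ≠ k - 1 := fun h => hex2 ⟨by rw [hlr2, h], hgr⟩
          have hval : NiceV x₀ (k-1) (poissonBracket dIm (bracketSeq [] g)) := by
            show NiceV x₀ (k-1) (poissonBracket dIm g)
            exact nice_pb_dIm hg0
          have h2 := hIter r _ (k-1) hval
          rw [hbs]
          exact niceV_eval h2 (by omega) ξ
        · rw [hbs, hgi]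
          have hzz : poissonBracket dIm (bracketSeq [] dIm) = fun _ _ => 0 := pb_self dIm
          rw [hzz, bs_zero]
      · have hlen2 : 1 ≤ rest'.length := by
          cases rest'
          · simp at hre
          · simp
        have hval := nice_pb_dIm (hPolyBS rest' g hmem' hg0)
        have h2 := hIter r _ (k-1) hval
        rw [hbs]
        exact niceV_eval h2 (by omega) ξ
end

section
/- Let m ≥ 2 be the order of the first nonvanishing derivative of S at x₀ of order ≥ 2, and let φ(x) = ±∫_{x₀}^x √((S'(t)/2 + λ)² + A(t)²) dt (with a fixed branch of the square root near the positive real value √α at x₀). Then Im φ(x) = (± Im λ / (2 · m! · √α)) · S^{(m)}(x₀) · (x - x₀)^m + O((x - x₀)^{m+1}) as x → x₀, where α = A(x₀)² - (Im λ)² > 0. -/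
open Complex Filter Topology Asymptotics

lemma abs_sub_le_of_mem_uIoc {x₀ x t : ℝ} (ht : t ∈ Set.uIoc x₀ x) :
    |t - x₀| ≤ |x - x₀| := by
  rcases Set.mem_uIoc.mp ht with ⟨h1, h2⟩ | ⟨h1, h2⟩
  · rw [_root_.abs_of_nonneg (by linarith)]
    exact le_trans (by linarith) (le_abs_self _)
  · rw [_root_.abs_of_nonpos (by linarith)]
    exact le_trans (by linarith) (neg_le_abs _)

lemma my_int_bigO (h : ℝ → ℝ) (x₀ : ℝ) (k : ℕ)
    (hh : h =O[𝓝 x₀] fun t => (t - x₀) ^ k) :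
    (fun x => ∫ t in x₀..x, h t) =O[𝓝 x₀] fun x => (x - x₀) ^ (k + 1) := by
  obtain ⟨C, hC, hCb⟩ := hh.exists_pos
  rw [IsBigOWith] at hCb
  rw [Metric.eventually_nhds_iff] at hCb
  obtain ⟨δ, hδ, hbound⟩ := hCb
  rw [isBigO_iff]
  refine ⟨C, ?_⟩
  filter_upwards [Metric.ball_mem_nhds x₀ hδ] with x hx
  have key : ∀ t ∈ Set.uIoc x₀ x, ‖h t‖ ≤ C * |x - x₀| ^ k := by
    intro t ht
    have h1 : |t - x₀| ≤ |x - x₀| := abs_sub_le_of_mem_uIoc ht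
    have h2 : dist t x₀ < δ := by
      rw [Real.dist_eq]
      calc |t - x₀| ≤ |x - x₀| := h1
        _ < δ := by rw [← Real.dist_eq]; exact hx
    calc ‖h t‖ ≤ C * ‖(t - x₀) ^ k‖ := hbound h2
      _ = C * |t - x₀| ^ k := by rw [norm_pow, Real.norm_eq_abs]
      _ ≤ C * |x - x₀| ^ k := by
          gcongr
  calc ‖∫ t in x₀..x, h t‖ ≤ C * |x - x₀| ^ k * |x - x₀| :=
        intervalIntegral.norm_integral_le_of_norm_le_const key
    _ = C * ‖(x - x₀) ^ (k + 1)‖ := by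
        rw [norm_pow, Real.norm_eq_abs, pow_succ]; ring

lemma my_taylor (x₀ : ℝ) : ∀ (n : ℕ) (f : ℝ → ℝ), ContDiff ℝ (⊤:ℕ∞) f →
    (∀ j, j < n → iteratedDeriv j f x₀ = 0) →
    (fun t => f t - iteratedDeriv n f x₀ / (Nat.factorial n) * (t - x₀) ^ n)
      =O[𝓝 x₀] fun t => (t - x₀) ^ (n + 1) := by
  intro n
  induction n with
  | zero =>
    intro f hf _
    have := ((hf.differentiable (by simp)) x₀).isBigO_sub
    simpa using this
  | succ n IH =>
    intro f hf h0
    have hf' : ContDiff ℝ (⊤:ℕ∞) (deriv f) := (contDiff_infty_iff_deriv.mp hf).2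
    have hder : ∀ j, j < n → iteratedDeriv j (deriv f) x₀ = 0 := by
      intro j hj
      rw [← iteratedDeriv_succ']
      exact h0 (j + 1) (by omega)
    have hIH := IH (deriv f) hf' hder
    set a := iteratedDeriv n (deriv f) x₀ with ha
    have haa : iteratedDeriv (n + 1) f x₀ = a := by rw [iteratedDeriv_succ']
    have hf0 : f x₀ = 0 := by
      have := h0 0 (by omega); rwa [iteratedDeriv_zero] at this
    have hdc : Continuous (deriv f) := hf'.continuous
    have key : ∀ x : ℝ, f x - iteratedDeriv (n+1) f x₀ / (Nat.factorial (n+1)) * (x - x₀) ^ (n+1)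
        = ∫ t in x₀..x, (deriv f t - a / (Nat.factorial n) * (t - x₀) ^ n) := by
      intro x
      have hftc : ∫ t in x₀..x, deriv f t = f x - f x₀ :=
        intervalIntegral.integral_deriv_eq_sub (fun t _ => (hf.differentiable (by simp)) t)
          (hdc.intervalIntegrable _ _)
      have hpoly : ∫ t in x₀..x, (t - x₀) ^ n = (x - x₀) ^ (n + 1) / (n + 1) := by
        have := intervalIntegral.integral_comp_sub_right (fun u => u ^ n) x₀ (a := x₀) (b := x)
        rw [this, sub_self, integral_pow]
        simp
      rw [intervalIntegral.integral_sub (hdc.intervalIntegrable _ _)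
        ((Continuous.intervalIntegrable (by continuity) _ _)),
        hftc, intervalIntegral.integral_const_mul, hpoly, hf0, haa]
      have hfac : (Nat.factorial (n+1) : ℝ) = (n+1) * Nat.factorial n := by
        rw [Nat.factorial_succ]; push_cast; ring
      rw [hfac]
      have h1 : (Nat.factorial n : ℝ) ≠ 0 := Nat.cast_ne_zero.mpr (Nat.factorial_ne_zero n)
      have h2 : ((n : ℝ) + 1) ≠ 0 := by positivity
      field_simp
      ring
    have := my_int_bigO (fun t => deriv f t - a / (Nat.factorial n) * (t - x₀) ^ n) x₀ (n + 1) hIH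
    refine this.congr' ?_ EventuallyEq.rfl
    exact Eventually.of_forall fun x => (key x).symm

lemma interval_integral_im {f : ℝ → ℂ} {a b : ℝ} (hf : IntervalIntegrable f MeasureTheory.volume a b) :
    (∫ t in a..b, f t).im = ∫ t in a..b, (f t).im := by
  have := Complex.imCLM.intervalIntegral_comp_comm hf
  simpa using this.symm

theorem stmt_4 (A S : ℝ → ℝ) (hA : ContDiff ℝ (⊤ : ℕ∞) A) (hS : ContDiff ℝ (⊤ : ℕ∞) S)
    (hApos : ∀ x, 0 < A x)
    (x₀ : ℝ) (lam : ℂ) (hre : lam.re = -(deriv S x₀) / 2)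
    (him : 0 < |lam.im|) (him' : |lam.im| < A x₀)
    (m : ℕ) (hm : 2 ≤ m)
    (hvan : ∀ j, 2 ≤ j → j < m → iteratedDeriv j S x₀ = 0)
    (hnz : iteratedDeriv m S x₀ ≠ 0)
    (α : ℝ) (hα : α = (A x₀)^2 - lam.im^2)
    (ε : ℝ) (hε : ε = 1 ∨ ε = -1)
    -- a fixed continuous branch of the square root near `x₀`, positive real at `x₀`
    (sq : ℝ → ℂ) (U : Set ℝ) (hU : U ∈ 𝓝 x₀) (hsqcont : ContinuousOn sq U)
    (hsq : ∀ t ∈ U, (sq t)^2 = ((deriv S t / 2 : ℝ) + lam)^2 + ((A t : ℝ) : ℂ)^2)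
    (hsq0 : sq x₀ = (Real.sqrt α : ℂ))
    (φ : ℝ → ℂ) (hφ : ∀ x, φ x = (ε : ℂ) * ∫ t in x₀..x, sq t) :
    (fun x => (φ x).im
        - ε * lam.im / (2 * (Nat.factorial m) * Real.sqrt α)
          * iteratedDeriv m S x₀ * (x - x₀)^m)
      =O[𝓝 x₀] (fun x => (x - x₀)^(m + 1)) := by
  obtain ⟨p, rfl⟩ : ∃ p, m = p + 2 := ⟨m - 2, by omega⟩
  set v := lam.im with hv
  have hαpos : 0 < α := by
    rw [hα]; nlinarith [_root_.sq_abs lam.im, abs_nonneg lam.im, hApos x₀]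
  set sα := Real.sqrt α with hsαdef
  have hsαpos : 0 < sα := Real.sqrt_pos.mpr hαpos
  have hsα2 : sα ^ 2 = α := Real.sq_sqrt hαpos.le
  have hS' : ContDiff ℝ (⊤:ℕ∞) (deriv S) :=
    (contDiff_infty_iff_deriv.mp (hS.of_le (by exact_mod_cast le_top))).2
  have hsqx : ContinuousAt sq x₀ := hsqcont.continuousAt hU
  have hsqtend : Tendsto sq (𝓝 x₀) (𝓝 ((sα : ℂ))) := by rw [← hsq0]; exact hsqx
  -- F and its expansion
  set F : ℝ → ℂ := fun t => (((deriv S t / 2 : ℝ) : ℂ) + lam) ^ 2 + ((A t : ℝ) : ℂ) ^ 2 with hFdef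
  have hFx₀ : F x₀ = (α : ℂ) := by
    have h1 : ((deriv S x₀ / 2 : ℝ) : ℂ) + lam = (v : ℂ) * Complex.I := by
      apply Complex.ext <;> simp [hre] <;> ring
    rw [hFdef]
    simp only [h1]
    rw [mul_pow, Complex.I_sq]
    rw [hα]
    push_cast
    ring
  have hFdiff : DifferentiableAt ℝ F x₀ := by
    have hd1 : Differentiable ℝ (fun t => ((deriv S t / 2 : ℝ) : ℂ)) :=
      Complex.ofRealCLM.differentiable.comp
        ((hS'.differentiable (by simp)).div_const 2)
    have hd2 : Differentiable ℝ (fun t => ((A t : ℝ) : ℂ)) :=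
      Complex.ofRealCLM.differentiable.comp
        (hA.differentiable (by simp))
    exact (((hd1.add_const lam).pow 2).add (hd2.pow 2)) x₀
  have hFO : (fun t => F t - (α : ℂ)) =O[𝓝 x₀] fun t => t - x₀ := by
    simpa [hFx₀] using hFdiff.isBigO_sub
  -- eventual good set
  have hev1 : ∀ᶠ t in 𝓝 x₀, ‖sq t - (sα : ℂ)‖ < sα / 2 := by
    have h0 : Tendsto (fun t => ‖sq t - (sα : ℂ)‖) (𝓝 x₀) (𝓝 0) := by
      rw [← tendsto_iff_norm_sub_tendsto_zero]; exact hsqtend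
    exact h0.eventually (gt_mem_nhds (by positivity))
  have hevU : ∀ᶠ t in 𝓝 x₀, t ∈ U := eventually_of_mem hU fun _ h => h
  have hgood := hev1.and hevU
  -- facts on good points
  have hre_sq : ∀ t : ℝ, ‖sq t - (sα : ℂ)‖ < sα / 2 → sα / 2 < (sq t).re := by
    intro t ht
    have h1 : |(sq t - (sα : ℂ)).re| ≤ ‖sq t - (sα : ℂ)‖ := Complex.abs_re_le_norm _
    have h2 : (sq t - (sα : ℂ)).re = (sq t).re - sα := by simp
    rw [h2] at h1
    have := abs_lt.mp (lt_of_le_of_lt h1 ht)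
    linarith [this.1]
  have hsum_ne : ∀ t : ℝ, ‖sq t - (sα : ℂ)‖ < sα / 2 → sq t + (sα : ℂ) ≠ 0 := by
    intro t ht h0
    have h1 := hre_sq t ht
    have h2 : (sq t + (sα : ℂ)).re = (sq t).re + sα := by simp
    rw [h0] at h2
    simp at h2
    linarith
  -- sq - sα = O(t - x₀)
  have hsqO : (fun t => sq t - (sα : ℂ)) =O[𝓝 x₀] fun t => t - x₀ := by
    have hne2 : ((sα : ℂ) + (sα : ℂ)) ≠ 0 := by
      intro h; rw [← Complex.ofReal_add] at h
      have := Complex.ofReal_eq_zero.mp h; linarith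
    have hinv : Tendsto (fun t => (sq t + (sα : ℂ))⁻¹) (𝓝 x₀) (𝓝 (((sα : ℂ) + sα)⁻¹)) :=
      (hsqtend.add tendsto_const_nhds).inv₀ hne2
    have hinvO : (fun t => (sq t + (sα : ℂ))⁻¹) =O[𝓝 x₀] (fun _ => (1 : ℝ)) :=
      hinv.isBigO_one ℝ
    have hmul := hFO.mul hinvO
    refine hmul.congr' ?_ (Eventually.of_forall fun t => mul_one _)
    filter_upwards [hgood] with t ht
    have hne := hsum_ne t ht.1
    have hFt : (sq t) ^ 2 = F t := hsq t ht.2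
    have hα2 : ((sα : ℂ)) ^ 2 = (α : ℂ) := by
      rw [← Complex.ofReal_pow, hsα2]
    field_simp
    rw [← hFt, ← hα2]
    ring
  have hRO : (fun t => (sq t).re - sα) =O[𝓝 x₀] fun t => t - x₀ := by
    refine (isBigO_of_le (𝓝 x₀) fun t => ?_).trans hsqO
    have : (sq t).re - sα = (sq t - (sα : ℂ)).re := by simp
    rw [this]
    simpa using Complex.abs_re_le_norm (sq t - (sα : ℂ))
  -- Taylor expansion of u
  set a := iteratedDeriv (p + 2) S x₀ with hadef
  have hTay : (fun t => (deriv S t - deriv S x₀)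
      - a / (Nat.factorial (p + 1)) * (t - x₀) ^ (p + 1)) =O[𝓝 x₀] fun t => (t - x₀) ^ (p + 2) := by
    set g : ℝ → ℝ := fun t => deriv S t - deriv S x₀ with hgdef
    have hg : ContDiff ℝ (⊤:ℕ∞) g := hS'.sub contDiff_const
    have hgder : ∀ j : ℕ, iteratedDeriv (j + 1) g = iteratedDeriv (j + 1) (deriv S) := by
      intro j
      rw [iteratedDeriv_succ', iteratedDeriv_succ']
      have hdg : deriv g = deriv (deriv S) := funext fun t => deriv_sub_const _
      rw [hdg]
    have hvan' : ∀ j, j < p + 1 → iteratedDeriv j g x₀ = 0 := by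
      intro j hj
      match j with
      | 0 => simp [hgdef, iteratedDeriv_zero]
      | j' + 1 =>
        rw [hgder j', ← iteratedDeriv_succ']
        exact hvan (j' + 2) (by omega) (by omega)
    have hident : iteratedDeriv (p + 1) g x₀ = a := by
      have : p + 1 = p + 1 := rfl
      rw [show p + 1 = p + 1 from rfl, hgder p, ← iteratedDeriv_succ']
    have := my_taylor x₀ (p + 1) g hg hvan'
    rwa [hident] at this
  set k := a / (2 * (Nat.factorial (p + 1))) with hkdef
  set u : ℝ → ℝ := fun t => (deriv S t - deriv S x₀) / 2 with hudef
  have hTay2 : (fun t => u t - k * (t - x₀) ^ (p + 1)) =O[𝓝 x₀] fun t => (t - x₀) ^ (p + 2) := by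
    have hfun : (fun t => u t - k * (t - x₀) ^ (p + 1))
        = fun t => (1/2) * ((deriv S t - deriv S x₀)
            - a / (Nat.factorial (p + 1)) * (t - x₀) ^ (p + 1)) := by
      funext t
      have hfac : (Nat.factorial (p+1) : ℝ) ≠ 0 := Nat.cast_ne_zero.mpr (Nat.factorial_ne_zero _)
      rw [hudef, hkdef]
      field_simp
    rw [hfun]
    exact hTay.const_mul_left _
  -- main integrand estimate
  set c₁ := v * a / (Nat.factorial (p + 1) * 2 * sα) with hc₁def
  have hint : (fun t => (sq t).im - c₁ * (t - x₀) ^ (p + 1)) =O[𝓝 x₀] fun t => (t - x₀) ^ (p + 2) := by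
    have hG : (fun t => sα * (u t - k * (t - x₀) ^ (p + 1))
        + k * (t - x₀) ^ (p + 1) * (sα - (sq t).re)) =O[𝓝 x₀] fun t => (t - x₀) ^ (p + 2) := by
      refine (hTay2.const_mul_left sα).add ?_
      have h1 : (fun t => k * (t - x₀) ^ (p + 1) * (sα - (sq t).re))
          =O[𝓝 x₀] fun t => (t - x₀) ^ (p + 1) * (t - x₀) := by
        have hneg : (fun t => sα - (sq t).re) =O[𝓝 x₀] fun t => t - x₀ := by
          simpa [neg_sub] using hRO.neg_left
        exact ((isBigO_refl (fun t : ℝ => (t - x₀) ^ (p + 1)) _).const_mul_left k).mul hneg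
      exact h1.congr_right fun t => (pow_succ (t - x₀) (p + 1)).symm
    have hRtend : Tendsto (fun t => (sq t).re) (𝓝 x₀) (𝓝 sα) := by
      have := (Complex.continuous_re.tendsto ((sα : ℂ))).comp hsqtend
      simpa [Function.comp_def] using this
    have hfac : Tendsto (fun t => v / ((sq t).re * sα)) (𝓝 x₀) (𝓝 (v / (sα * sα))) :=
      tendsto_const_nhds.div (hRtend.mul tendsto_const_nhds) (mul_pos hsαpos hsαpos).ne'
    have hfacO : (fun t => v / ((sq t).re * sα)) =O[𝓝 x₀] (fun _ => (1 : ℝ)) :=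
      hfac.isBigO_one ℝ
    have hmul := hfacO.mul hG
    refine hmul.congr' ?_ (Eventually.of_forall fun t => one_mul _)
    filter_upwards [hgood] with t ht
    have hR : sα / 2 < (sq t).re := hre_sq t ht.1
    have hRne : (sq t).re ≠ 0 := by intro h; rw [h] at hR; linarith
    -- imaginary part formula
    have him_t : (sq t).im * (2 * (sq t).re) = 2 * u t * v := by
      have h2 := congrArg Complex.im (hsq t ht.2)
      rw [pow_two, pow_two, pow_two] at h2
      simp only [Complex.mul_im, Complex.add_im, Complex.add_re, Complex.ofReal_re,
        Complex.ofReal_im] at h2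
      simp only [hre] at h2
      simp only [hudef, hv]
      linear_combination h2
    have him_t' : (sq t).im = v * u t / (sq t).re := by
      field_simp
      linarith [him_t]
    rw [him_t', hc₁def, hkdef]
    have hfacne : (Nat.factorial (p + 1) : ℝ) ≠ 0 := Nat.cast_ne_zero.mpr (Nat.factorial_ne_zero _)
    field_simp
    ring
  -- from integrand to integral
  obtain ⟨δ, hδpos, hδU⟩ := Metric.mem_nhds_iff.mp hU
  have hIO := my_int_bigO (fun t => (sq t).im - c₁ * (t - x₀) ^ (p + 1)) x₀ (p + 2) hint
  refine ((hIO.const_mul_left ε).congr' ?_ EventuallyEq.rfl)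
  filter_upwards [Metric.ball_mem_nhds x₀ hδpos] with x hx
  have hsub : Set.uIcc x₀ x ⊆ U := by
    intro t ht
    apply hδU
    rw [Metric.mem_ball, Real.dist_eq]
    have h1 : |t - x₀| ≤ |x - x₀| := by
      rcases Set.mem_uIcc.mp ht with ⟨h1, h2⟩ | ⟨h1, h2⟩
      · rw [_root_.abs_of_nonneg (by linarith)]
        exact le_trans (by linarith) (le_abs_self _)
      · rw [_root_.abs_of_nonpos (by linarith)]
        exact le_trans (by linarith) (neg_le_abs _)
    calc |t - x₀| ≤ |x - x₀| := h1
      _ < δ := by rw [← Real.dist_eq]; exact hx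
  have hci : IntervalIntegrable sq MeasureTheory.volume x₀ x :=
    (hsqcont.mono hsub).intervalIntegrable
  have him_int : IntervalIntegrable (fun t => (sq t).im) MeasureTheory.volume x₀ x :=
    (Complex.continuous_im.comp_continuousOn (hsqcont.mono hsub)).intervalIntegrable
  have hpoly_int : IntervalIntegrable (fun t => c₁ * (t - x₀) ^ (p + 1))
      MeasureTheory.volume x₀ x :=
    Continuous.intervalIntegrable (continuous_const.mul ((continuous_id.sub continuous_const).pow (p+1))) _ _
  have him_eq : ((∫ t in x₀..x, sq t)).im = ∫ t in x₀..x, (sq t).im :=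
    interval_integral_im hci
  have hpoly : ∫ t in x₀..x, (t - x₀) ^ (p + 1) = (x - x₀) ^ (p + 2) / (p + 2) := by
    have := intervalIntegral.integral_comp_sub_right (fun u => u ^ (p + 1)) x₀ (a := x₀) (b := x)
    rw [this, sub_self, integral_pow]
    norm_num
    ring_nf
  have hsplit : ∫ t in x₀..x, ((sq t).im - c₁ * (t - x₀) ^ (p + 1))
      = (∫ t in x₀..x, (sq t).im) - c₁ * ((x - x₀) ^ (p + 2) / (p + 2)) := by
    rw [intervalIntegral.integral_sub him_int hpoly_int,
      intervalIntegral.integral_const_mul, hpoly]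
  rw [hφ x]
  have hmulim : (((ε : ℂ)) * ∫ t in x₀..x, sq t).im = ε * ((∫ t in x₀..x, sq t)).im := by
    simp [Complex.mul_im]
  rw [hmulim, him_eq, hsplit]
  have hfac2 : (Nat.factorial (p + 2) : ℝ) = (p + 2) * Nat.factorial (p + 1) := by
    rw [Nat.factorial_succ]; push_cast; ring
  rw [hfac2]
  have hfacne : (Nat.factorial (p + 1) : ℝ) ≠ 0 := Nat.cast_ne_zero.mpr (Nat.factorial_ne_zero _)
  have hp2 : ((p : ℝ) + 2) ≠ 0 := by positivity
  rw [hc₁def]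
  field_simp
end

section
/- Under the eikonal equation (φ')² = (S'/2+λ)² + A², with S' + 2λ ≠ 0 and φ' + S'/2 + λ ≠ 0, the matrix M(x) admits the diagonalization M = R · diag(S' + 2λ, 0) · R⁻¹ where R = [[φ' + S'/2 + λ, -iA], [iA, φ' + S'/2 + λ]], and R⁻¹ = (S' + 2λ)⁻¹ · [[1, iA/(φ' + S'/2 + λ)], [-iA/(φ' + S'/2 + λ), 1]]. -/
/-!
Write `a = φ' + S'/2 + λ`, `b = iA` and `d = S' + 2λ`. The eikonal equation says exactly
`a² + b² = d a`, so `M = !![a, b; b, d - a]` is the rank-one matrix `a⁻¹ (a, b)ᵀ (a, b)`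
with trace `d`. Its image is spanned by the first column `(a, b)` of `R`, its kernel by the
second column `(-b, a)`, and `R` has determinant `a² + b² = d a ≠ 0`.
-/

open Complex Matrix

namespace Matrix

variable {K : Type*} [Field K] {a b d : K}

theorem mul_smul_eq_one_of_sq_add_sq_eq_mul (hab : a ^ 2 + b ^ 2 = d * a) (ha : a ≠ 0)
    (hd : d ≠ 0) :
    !![a, -b; b, a] * (d⁻¹ • !![1, b / a; -b / a, 1]) = 1 := by
  rw [Matrix.mul_smul, mul_fin_two, one_fin_two, smul_of]
  ext i j
  fin_cases i <;> fin_cases j <;> simp [field] <;> linear_combination hab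

theorem eq_mul_mul_smul_of_sq_add_sq_eq_mul (hab : a ^ 2 + b ^ 2 = d * a) (ha : a ≠ 0)
    (hd : d ≠ 0) :
    !![a, b; b, d - a] = !![a, -b; b, a] * !![d, 0; 0, 0] * (d⁻¹ • !![1, b / a; -b / a, 1]) := by
  rw [Matrix.mul_smul, mul_fin_two, mul_fin_two, smul_of]
  ext i j
  fin_cases i <;> fin_cases j <;> simp [field]
  linear_combination -hab

end Matrix

theorem stmt_6 (A S : ℝ → ℝ) (lam : ℂ) (φ' : ℝ → ℂ)
    (heik : ∀ x, (φ' x)^2 = ((deriv S x / 2 : ℝ) + lam)^2 + ((A x : ℝ) : ℂ)^2)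
    (x : ℝ)
    (h1 : ((deriv S x : ℝ) : ℂ) + 2 * lam ≠ 0)
    (h2 : φ' x + (deriv S x / 2 : ℝ) + lam ≠ 0)
    (M R Rinv : Matrix (Fin 2) (Fin 2) ℂ)
    (hM : M = !![φ' x + (deriv S x / 2 : ℝ) + lam, Complex.I * A x;
                 Complex.I * A x, -φ' x + (deriv S x / 2 : ℝ) + lam])
    (hR : R = !![φ' x + (deriv S x / 2 : ℝ) + lam, -(Complex.I * A x);
                 Complex.I * A x, φ' x + (deriv S x / 2 : ℝ) + lam])
    (hRinv : Rinv = (((deriv S x : ℝ) : ℂ) + 2 * lam)⁻¹ •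
        !![1, Complex.I * A x / (φ' x + (deriv S x / 2 : ℝ) + lam);
           -(Complex.I * A x) / (φ' x + (deriv S x / 2 : ℝ) + lam), 1]) :
    R * Rinv = 1 ∧ Rinv * R = 1
    ∧ M = R * !![((deriv S x : ℝ) : ℂ) + 2 * lam, 0; 0, 0] * Rinv := by
  have hhalf : ((deriv S x / 2 : ℝ) : ℂ) = ((deriv S x : ℝ) : ℂ) / 2 := by push_cast; ring
  have hab : (φ' x + (deriv S x / 2 : ℝ) + lam) ^ 2 + (I * A x) ^ 2
      = (((deriv S x : ℝ) : ℂ) + 2 * lam) * (φ' x + (deriv S x / 2 : ℝ) + lam) := by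
    have heik_x := heik x
    rw [hhalf] at heik_x ⊢
    linear_combination heik_x + (A x : ℂ) ^ 2 * I_sq
  have hM' : M = !![φ' x + (deriv S x / 2 : ℝ) + lam, I * A x; I * A x,
      (((deriv S x : ℝ) : ℂ) + 2 * lam) - (φ' x + (deriv S x / 2 : ℝ) + lam)] := by
    rw [hM, hhalf]
    ring_nf
  have hRRinv : R * Rinv = 1 := hR ▸ hRinv ▸ mul_smul_eq_one_of_sq_add_sq_eq_mul hab h2 h1
  exact ⟨hRRinv, mul_eq_one_comm.mp hRRinv,
    hM' ▸ hR ▸ hRinv ▸ eq_mul_mul_smul_of_sq_add_sq_eq_mul hab h2 h1⟩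
end

section
/- If α(x) = [(φ'(x) + S'(x)/2 + λ)² + A(x)²]^{-1/2}, a₀ = α·(-iA), and b₀ = α·(φ' + S'/2 + λ), then (a₀, b₀) lies in the kernel of M and (i a₀', -i b₀') lies in the image of M (i.e., is a scalar multiple of the eigenvector (φ' + S'/2 + λ, iA)). -/
open Complex Matrix

private lemma deriv_differentiable {F : Type*} [NormedAddCommGroup F] [NormedSpace ℝ F]
    {f : ℝ → F} (hf : ContDiff ℝ (⊤ : ℕ∞) f) : Differentiable ℝ (deriv f) :=
  ((contDiff_infty_iff_deriv.mp (hf.of_le (by simp))).2).differentiable (by simp)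

theorem stmt_7 (A S : ℝ → ℝ) (hA : ContDiff ℝ (⊤ : ℕ∞) A) (hS : ContDiff ℝ (⊤ : ℕ∞) S) (lam : ℂ)
    (φ : ℝ → ℂ) (hφ : ContDiff ℝ (⊤ : ℕ∞) φ)
    (heik : ∀ x, (deriv φ x)^2 = ((deriv S x / 2 : ℝ) + lam)^2 + ((A x : ℝ) : ℂ)^2)
    (hne : ∀ x, (deriv φ x + (deriv S x / 2 : ℝ) + lam)^2 + ((A x : ℝ) : ℂ)^2 ≠ 0)
    (hne' : ∀ x, deriv φ x + (deriv S x / 2 : ℝ) + lam ≠ 0)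
    -- a fixed smooth branch `al` of the inverse square root
    (al : ℝ → ℂ) (hal : ContDiff ℝ (⊤ : ℕ∞) al)
    (hal2 : ∀ x, (al x)^2 = ((deriv φ x + (deriv S x / 2 : ℝ) + lam)^2 + ((A x : ℝ) : ℂ)^2)⁻¹)
    (a₀ b₀ : ℝ → ℂ)
    (ha₀ : a₀ = fun x => al x * (-(Complex.I * A x)))
    (hb₀ : b₀ = fun x => al x * (deriv φ x + (deriv S x / 2 : ℝ) + lam))
    (x : ℝ)
    (M : Matrix (Fin 2) (Fin 2) ℂ)
    (hM : M = !![deriv φ x + (deriv S x / 2 : ℝ) + lam, Complex.I * A x;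
                 Complex.I * A x, -deriv φ x + (deriv S x / 2 : ℝ) + lam]) :
    M.mulVec ![a₀ x, b₀ x] = 0
    ∧ ∃ c : ℂ, ![Complex.I * deriv a₀ x, -(Complex.I * deriv b₀ x)]
        = c • ![deriv φ x + (deriv S x / 2 : ℝ) + lam, Complex.I * A x] := by
  have hAx : HasDerivAt (fun y => ((A y : ℝ) : ℂ)) ((deriv A x : ℝ) : ℂ) x :=
    ((hA.differentiable (by simp) x).hasDerivAt).ofReal_comp
  have hSx : HasDerivAt (fun y => ((deriv S y / 2 : ℝ) : ℂ)) ((deriv (deriv S) x / 2 : ℝ) : ℂ) x :=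
    (((deriv_differentiable hS x).hasDerivAt).div_const 2).ofReal_comp
  have hφx : HasDerivAt (deriv φ) (deriv (deriv φ) x) x :=
    (deriv_differentiable hφ x).hasDerivAt
  set W : ℂ := deriv φ x + ((deriv S x / 2 : ℝ) : ℂ) + lam with hW
  set W' : ℂ := deriv (deriv φ) x + ((deriv (deriv S) x / 2 : ℝ) : ℂ) with hW'
  set Aa : ℂ := ((A x : ℝ) : ℂ) with hAa
  set A' : ℂ := ((deriv A x : ℝ) : ℂ) with hA'
  have hw : HasDerivAt (fun y => deriv φ y + ((deriv S y / 2 : ℝ) : ℂ) + lam) W' x :=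
    ((hφx.add hSx).add_const lam)
  have halx : HasDerivAt al (deriv al x) x := (hal.differentiable (by simp) x).hasDerivAt
  set a := al x
  set a' := deriv al x
  have hda : deriv a₀ x = a' * (-(Complex.I * Aa)) + a * (-(Complex.I * A')) := by
    rw [ha₀]
    exact (halx.mul ((hAx.const_mul Complex.I).neg)).deriv
  have hdb : deriv b₀ x = a' * W + a * W' := by
    rw [hb₀]
    exact (halx.mul hw).deriv
  have hgx : W ^ 2 + Aa ^ 2 ≠ 0 := hne x
  have ha0 : a ≠ 0 := by
    have h2 : a ^ 2 = (W ^ 2 + Aa ^ 2)⁻¹ := hal2 x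
    intro h
    apply hgx
    rw [h] at h2
    simpa [eq_comm, inv_eq_zero] using h2
  have hrel : 2 * a * a' * (W ^ 2 + Aa ^ 2) + a ^ 2 * (2 * W * W' + 2 * Aa * A') = 0 := by
    have h : HasDerivAt (fun y => (al y * al y) *
        ((deriv φ y + ((deriv S y / 2 : ℝ) : ℂ) + lam) * (deriv φ y + ((deriv S y / 2 : ℝ) : ℂ) + lam)
          + ((A y : ℝ) : ℂ) * ((A y : ℝ) : ℂ)))
        ((a' * a + a * a') * (W * W + Aa * Aa) + (a * a) * ((W' * W + W * W') + (A' * Aa + Aa * A'))) x :=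
      (halx.mul halx).mul ((hw.mul hw).add (hAx.mul hAx))
    have hFconst : (fun y => (al y * al y) *
        ((deriv φ y + ((deriv S y / 2 : ℝ) : ℂ) + lam) * (deriv φ y + ((deriv S y / 2 : ℝ) : ℂ) + lam)
          + ((A y : ℝ) : ℂ) * ((A y : ℝ) : ℂ))) = fun _ => (1 : ℂ) := by
      funext y
      rw [← pow_two, ← pow_two, ← pow_two, hal2 y]
      exact inv_mul_cancel₀ (hne y)
    have h0 := (hFconst ▸ h).unique (hasDerivAt_const x (1 : ℂ))
    linear_combination h0
  have hrel2 : a' * (W ^ 2 + Aa ^ 2) + a * (W * W' + Aa * A') = 0 := by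
    have h2 : a * ((2:ℂ) * (a' * (W ^ 2 + Aa ^ 2) + a * (W * W' + Aa * A'))) = 0 := by
      rw [← hrel]; ring
    rcases mul_eq_zero.mp h2 with h | h
    · exact absurd h ha0
    · rcases mul_eq_zero.mp h with h | h
      · exact absurd h two_ne_zero
      · exact h
  have hWne : W ≠ 0 := hne' x
  constructor
  · have hk := heik x
    rw [hM, ha₀, hb₀]
    funext i
    fin_cases i
    · simp [Matrix.mulVec, dotProduct, Fin.sum_univ_two]
      simp only [hW, hAa]
      push_cast
      ring
    · simp [Matrix.mulVec, dotProduct, Fin.sum_univ_two]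
      simp only [hW, hAa]
      push_cast at hk ⊢
      linear_combination (-(al x)) * hk - ((A x : ℂ))^2 * al x * Complex.I_sq
  · refine ⟨Complex.I * deriv a₀ x / W, ?_⟩
    funext i
    fin_cases i
    · show Complex.I * deriv a₀ x = Complex.I * deriv a₀ x / W * W
      field_simp
    · show -(Complex.I * deriv b₀ x) = Complex.I * deriv a₀ x / W * (Complex.I * Aa)
      rw [hda, hdb, div_mul_eq_mul_div, eq_div_iff hWne]
      linear_combination (-Complex.I) * hrel2
        + (Complex.I * ((a' * Aa + a * A') * Aa)) * Complex.I_sq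
end

section
/- Suppose A is bounded, S' is bounded, and |−ξ² + (S'(x)/2 + λ)² + A(x)²| ≥ ε for all (x,ξ) ∈ ℝ², for some ε > 0. Then there exists a constant C = C(ε, λ, ‖S'‖_∞, ‖A‖_∞) such that the matrix (p(x,ξ) − λI) is invertible for all (x,ξ) and ‖(p(x,ξ) − λI)⁻¹‖ ≤ C(1 + |ξ|)⁻¹ for all (x,ξ) ∈ ℝ². -/
/-!
The determinant of `p(x, ξ) - λ` is exactly the quantity `-ξ² + (S'(x)/2 + λ)² + A(x)²` bounded
below by `ε`, while trivially `|det| ≥ ξ² - K²` with `K = ‖S'‖/2 + |λ| + ‖A‖`; together these give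
`(1 + |ξ|)² ≲ |det|`. The inverse is the adjugate divided by the determinant, and the entries of
the adjugate of a `2 × 2` matrix are, up to sign, its own entries, hence `O(1 + |ξ|)`.
-/

open Complex Matrix

/-- The symbol of the Zakharov–Shabat operator. -/
noncomputable def zsSymbol (A : ℝ → ℝ) (S' : ℝ → ℝ) (x ξ : ℝ) : Matrix (Fin 2) (Fin 2) ℂ :=
  !![-(ξ : ℂ) - (S' x) / 2, -Complex.I * A x;
     -Complex.I * A x, (ξ : ℂ) - (S' x) / 2]

theorem Matrix.norm_inv_fin_two_apply_le {𝕜 : Type*} [NormedField 𝕜]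
    (M : Matrix (Fin 2) (Fin 2) 𝕜) {R : ℝ} (hM : ∀ i j, ‖M i j‖ ≤ R) (i j : Fin 2) :
    ‖M⁻¹ i j‖ ≤ R / ‖M.det‖ := by
  have hadj : ‖M.adjugate i j‖ ≤ R := by
    rw [adjugate_fin_two]
    fin_cases i <;> fin_cases j <;> simpa using hM _ _
  rw [inv_def, Ring.inverse_eq_inv', smul_apply, smul_eq_mul, norm_mul, norm_inv, div_eq_inv_mul]
  exact mul_le_mul_of_nonneg_left hadj (by positivity)

theorem one_add_sq_le_mul_of_le {ε d t B : ℝ} (hε : 0 < ε) (hB : 0 ≤ B) (hεd : ε ≤ d)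
    (htd : t ^ 2 - B ≤ d) : (1 + t) ^ 2 ≤ (2 + 2 * (1 + B) / ε) * d := by
  have h1 : 2 * (1 + B) ≤ 2 * (1 + B) / ε * d := by
    rw [div_mul_eq_mul_div, le_div_iff₀ hε]; nlinarith
  calc (1 + t) ^ 2 ≤ 2 * d + 2 * (1 + B) := by nlinarith [sq_nonneg (1 - t)]
    _ ≤ (2 + 2 * (1 + B) / ε) * d := by linarith

theorem add_div_le_mul_inv_one_add {t K d c : ℝ} (ht : 0 ≤ t) (hK : 0 ≤ K) (hd : 0 < d)
    (htd : (1 + t) ^ 2 ≤ c * d) : (t + K) / d ≤ (1 + K) * c * (1 + t)⁻¹ := by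
  have h1t : 0 < 1 + t := by positivity
  rw [div_le_iff₀ hd, ← div_eq_mul_inv, div_mul_eq_mul_div, le_div_iff₀ h1t]
  calc (t + K) * (1 + t) ≤ (1 + K) * (1 + t) ^ 2 := by nlinarith [mul_nonneg hK ht]
    _ ≤ (1 + K) * c * d := by rw [mul_assoc]; gcongr

section ZakharovShabat

variable (A S' : ℝ → ℝ) (lam : ℂ) (x ξ : ℝ)

theorem zsSymbol_sub_smul_one :
    zsSymbol A S' x ξ - lam • 1 =
      !![-(ξ : ℂ) - (((S' x / 2 : ℝ) : ℂ) + lam), -I * A x;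
         -I * A x, ξ - (((S' x / 2 : ℝ) : ℂ) + lam)] := by
  ext i j
  fin_cases i <;> fin_cases j <;> simp [zsSymbol] <;> ring

theorem det_zsSymbol_sub_smul_one :
    (zsSymbol A S' x ξ - lam • 1).det =
      -(ξ : ℂ) ^ 2 + ((S' x / 2 : ℝ) + lam) ^ 2 + ((A x : ℝ) : ℂ) ^ 2 := by
  rw [zsSymbol_sub_smul_one, det_fin_two_of]
  linear_combination (-((A x : ℂ) ^ 2)) * I_sq

theorem norm_ofReal_half_add_le : ‖((S' x / 2 : ℝ) : ℂ) + lam‖ ≤ |S' x| / 2 + ‖lam‖ := by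
  refine (norm_add_le _ _).trans ?_
  rw [norm_real, Real.norm_eq_abs, abs_div, abs_two]

theorem norm_zsSymbol_sub_smul_one_apply_le (i j : Fin 2) :
    ‖(zsSymbol A S' x ξ - lam • 1) i j‖ ≤ |ξ| + (|S' x| / 2 + ‖lam‖ + |A x|) := by
  have ha := norm_ofReal_half_add_le S' lam x
  have hdiag (η : ℝ) (hη : |η| = |ξ|) :
      ‖(η : ℂ) - (((S' x / 2 : ℝ) : ℂ) + lam)‖ ≤ |ξ| + (|S' x| / 2 + ‖lam‖ + |A x|) := by
    refine (norm_sub_le _ _).trans ?_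
    rw [norm_real, Real.norm_eq_abs, hη]
    linarith [abs_nonneg (A x)]
  have hoff : ‖-I * (A x : ℂ)‖ ≤ |ξ| + (|S' x| / 2 + ‖lam‖ + |A x|) := by
    rw [norm_mul, norm_neg, norm_I, one_mul, norm_real, Real.norm_eq_abs]
    linarith [abs_nonneg ξ, (norm_nonneg _).trans ha]
  rw [zsSymbol_sub_smul_one]
  fin_cases i <;> fin_cases j <;>
    simp only [of_apply, cons_val', cons_val_zero, cons_val_one, empty_val',
      cons_val_fin_one, Fin.zero_eta, Fin.mk_one]
  · simpa using hdiag (-ξ) (abs_neg ξ)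
  · exact hoff
  · exact hoff
  · exact hdiag ξ rfl

theorem sq_sub_sq_le_norm_det_zsSymbol_sub_smul_one :
    |ξ| ^ 2 - (|S' x| / 2 + ‖lam‖ + |A x|) ^ 2 ≤ ‖(zsSymbol A S' x ξ - lam • 1).det‖ := by
  have ha := norm_ofReal_half_add_le S' lam x
  set a : ℂ := ((S' x / 2 : ℝ) : ℂ) + lam
  have hw : ‖a ^ 2 + ((A x : ℝ) : ℂ) ^ 2‖ ≤ (|S' x| / 2 + ‖lam‖ + |A x|) ^ 2 := by
    refine (norm_add_le _ _).trans ?_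
    rw [norm_pow, norm_pow, norm_real, Real.norm_eq_abs]
    nlinarith [norm_nonneg a, abs_nonneg (A x)]
  have hξ : ‖-(ξ : ℂ) ^ 2‖ = |ξ| ^ 2 := by rw [norm_neg, norm_pow, norm_real, Real.norm_eq_abs]
  calc |ξ| ^ 2 - (|S' x| / 2 + ‖lam‖ + |A x|) ^ 2
      ≤ ‖-(ξ : ℂ) ^ 2‖ - ‖-(a ^ 2 + ((A x : ℝ) : ℂ) ^ 2)‖ := by rw [hξ, norm_neg]; linarith
    _ ≤ ‖-(ξ : ℂ) ^ 2 - -(a ^ 2 + ((A x : ℝ) : ℂ) ^ 2)‖ := norm_sub_norm_le _ _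
    _ = _ := by rw [det_zsSymbol_sub_smul_one, sub_neg_eq_add, add_assoc]

end ZakharovShabat

theorem stmt_10_general (A S : ℝ → ℝ)
    (MA : ℝ) (hMA : ∀ x, |A x| ≤ MA)
    (MS : ℝ) (hMS : ∀ x, |deriv S x| ≤ MS)
    (lam : ℂ) (ε : ℝ) (hε : 0 < ε)
    (hlow : ∀ x ξ : ℝ,
      ε ≤ ‖(-(ξ : ℂ)^2 + ((deriv S x / 2 : ℝ) + lam)^2 + ((A x : ℝ) : ℂ)^2)‖) :
    ∃ C : ℝ, 0 < C ∧ ∀ x ξ : ℝ,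
      IsUnit (zsSymbol A (deriv S) x ξ - lam • (1 : Matrix (Fin 2) (Fin 2) ℂ))
      ∧ ∀ i j : Fin 2,
          ‖(((zsSymbol A (deriv S) x ξ - lam • (1 : Matrix (Fin 2) (Fin 2) ℂ))⁻¹) i j)‖
            ≤ C * (1 + |ξ|)⁻¹ := by
  set K := MS / 2 + ‖lam‖ + MA with hK_def
  have hK : 0 ≤ K := by
    have := (abs_nonneg _).trans (hMA 0); have := (abs_nonneg _).trans (hMS 0); positivity
  refine ⟨(1 + K) * (2 + 2 * (1 + K ^ 2) / ε), by positivity, fun x ξ => ?_⟩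
  set M := zsSymbol A (deriv S) x ξ - lam • (1 : Matrix (Fin 2) (Fin 2) ℂ)
  have hKx : |deriv S x| / 2 + ‖lam‖ + |A x| ≤ K := by linarith [hMA x, hMS x, hK_def]
  have hεdet : ε ≤ ‖M.det‖ := det_zsSymbol_sub_smul_one A (deriv S) lam x ξ ▸ hlow x ξ
  have hdet : 0 < ‖M.det‖ := hε.trans_le hεdet
  have hentry (i j : Fin 2) : ‖M i j‖ ≤ |ξ| + K :=
    (norm_zsSymbol_sub_smul_one_apply_le A (deriv S) lam x ξ i j).trans (by linarith)
  have hξdet : |ξ| ^ 2 - K ^ 2 ≤ ‖M.det‖ := by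
    have := sq_sub_sq_le_norm_det_zsSymbol_sub_smul_one A (deriv S) lam x ξ
    have : (|deriv S x| / 2 + ‖lam‖ + |A x|) ^ 2 ≤ K ^ 2 := by gcongr
    linarith
  refine ⟨isUnit_iff_isUnit_det M |>.2 (norm_pos_iff.1 hdet).isUnit, fun i j => ?_⟩
  calc ‖M⁻¹ i j‖ ≤ (|ξ| + K) / ‖M.det‖ := M.norm_inv_fin_two_apply_le hentry i j
    _ ≤ _ := add_div_le_mul_inv_one_add (abs_nonneg ξ) hK hdet
      (one_add_sq_le_mul_of_le hε (sq_nonneg K) hεdet hξdet)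

theorem stmt_10 (A S : ℝ → ℝ) (hApos : ∀ x, 0 < A x)
    (MA : ℝ) (hMA : ∀ x, |A x| ≤ MA)
    (MS : ℝ) (hMS : ∀ x, |deriv S x| ≤ MS)
    (lam : ℂ) (ε : ℝ) (hε : 0 < ε)
    (hlow : ∀ x ξ : ℝ,
      ε ≤ ‖(-(ξ : ℂ)^2 + ((deriv S x / 2 : ℝ) + lam)^2 + ((A x : ℝ) : ℂ)^2)‖) :
    ∃ C : ℝ, 0 < C ∧ ∀ x ξ : ℝ,
      IsUnit (zsSymbol A (deriv S) x ξ - lam • (1 : Matrix (Fin 2) (Fin 2) ℂ))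
      ∧ ∀ i j : Fin 2,
          ‖(((zsSymbol A (deriv S) x ξ - lam • (1 : Matrix (Fin 2) (Fin 2) ℂ))⁻¹) i j)‖
            ≤ C * (1 + |ξ|)⁻¹ :=
  stmt_10_general A S MA hMA MS hMS lam ε hε hlow
end

section
/- Suppose A is a positive continuous function tending to 0 at ±∞ and S' is continuous. Then the condition 'there exists ε > 0 with |det(p(x,ξ) − λI)| ≥ ε for all (x,ξ) ∈ ℝ²' fails if and only if either Im λ = 0, or Im λ ≠ 0 and there exists x₀ ∈ ℝ with Re λ = −S'(x₀)/2 and |Im λ| ≤ A(x₀). -/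
/-!
If `Im λ = 0`, or if `Re λ = -S'(x₀)/2` with `|Im λ| ≤ A(x₀)`, the determinant at `x₀` vanishes
for some real `ξ`. Otherwise, with `c = S'(x)/2 + Re λ`, the imaginary and real parts give
`|det| ≥ max (2 |Im λ| |c|) ((Im λ)² - c² - A(x)²)`, a continuous positive function of `x` that is
at least `(Im λ)²/2` where `A < |Im λ|/2`, hence off a compact set; the extreme value theorem
turns this into a uniform bound.
-/

open Complex Filter Topology

/-- `det (p(x, ξ) - λ I)` with `r = S'(x)/2` and `a = A(x)`. -/
def symbolDet (r a : ℝ) (lam : ℂ) (ξ : ℝ) : ℂ :=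
  -(ξ : ℂ) ^ 2 + ((r : ℂ) + lam) ^ 2 + ((a : ℝ) : ℂ) ^ 2

lemma symbolDet_re (r a : ℝ) (lam : ℂ) (ξ : ℝ) :
    (symbolDet r a lam ξ).re = -ξ ^ 2 + (r + lam.re) ^ 2 - lam.im ^ 2 + a ^ 2 := by
  simp [symbolDet, pow_two]
  ring

lemma symbolDet_im (r a : ℝ) (lam : ℂ) (ξ : ℝ) :
    (symbolDet r a lam ξ).im = 2 * (r + lam.re) * lam.im := by
  simp [symbolDet, pow_two]
  ring

lemma exists_symbolDet_eq_zero {r a : ℝ} {lam : ℂ} (him : (r + lam.re) * lam.im = 0)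
    (hre : lam.im ^ 2 ≤ (r + lam.re) ^ 2 + a ^ 2) : ∃ ξ : ℝ, symbolDet r a lam ξ = 0 := by
  refine ⟨√((r + lam.re) ^ 2 - lam.im ^ 2 + a ^ 2), Complex.ext ?_ ?_⟩
  · rw [symbolDet_re, Real.sq_sqrt (by linarith), zero_re]
    ring
  · rw [symbolDet_im, zero_im, mul_assoc, him, mul_zero]

noncomputable def symbolDetLowerBound (r a : ℝ) (lam : ℂ) : ℝ :=
  max (2 * |lam.im| * |r + lam.re|) (lam.im ^ 2 - (r + lam.re) ^ 2 - a ^ 2)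

lemma symbolDetLowerBound_le_norm (r a : ℝ) (lam : ℂ) (ξ : ℝ) :
    symbolDetLowerBound r a lam ≤ ‖symbolDet r a lam ξ‖ := by
  apply max_le
  · calc 2 * |lam.im| * |r + lam.re| = |(symbolDet r a lam ξ).im| := by
          rw [symbolDet_im, abs_mul, abs_mul, abs_two]
          ring
      _ ≤ ‖symbolDet r a lam ξ‖ := abs_im_le_norm _
  · calc lam.im ^ 2 - (r + lam.re) ^ 2 - a ^ 2 ≤ -(symbolDet r a lam ξ).re := by
          rw [symbolDet_re]
          nlinarith [sq_nonneg ξ]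
      _ ≤ |(symbolDet r a lam ξ).re| := neg_le_abs _
      _ ≤ ‖symbolDet r a lam ξ‖ := abs_re_le_norm _

lemma symbolDetLowerBound_pos {r a : ℝ} {lam : ℂ} (hb : lam.im ≠ 0)
    (ha : r + lam.re = 0 → |a| < |lam.im|) : 0 < symbolDetLowerBound r a lam := by
  rcases eq_or_ne (r + lam.re) 0 with hc | hc
  · refine lt_max_of_lt_right ?_
    have := sq_lt_sq.mpr (ha hc)
    rw [hc]
    linarith
  · exact lt_max_of_lt_left (by positivity)

lemma half_sq_im_le_symbolDetLowerBound {r a : ℝ} {lam : ℂ} (ha : |a| < |lam.im| / 2) :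
    lam.im ^ 2 / 2 ≤ symbolDetLowerBound r a lam := by
  rcases le_or_gt (|lam.im| / 2) |r + lam.re| with hc | hc
  · refine le_max_of_le_left ?_
    nlinarith [sq_abs lam.im, abs_nonneg lam.im]
  · refine le_max_of_le_right ?_
    have hc2 := sq_lt_sq.mpr (hc.trans_eq (abs_of_nonneg (by positivity)).symm)
    have ha2 := sq_lt_sq.mpr (ha.trans_eq (abs_of_nonneg (by positivity)).symm)
    rw [div_pow, sq_abs] at hc2 ha2
    linarith

lemma Continuous.exists_pos_le_of_eventually_cocompact {X : Type*} [TopologicalSpace X]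
    [Nonempty X] {f : X → ℝ} (hf : Continuous f) (hpos : ∀ x, 0 < f x) {δ : ℝ} (hδ : 0 < δ)
    (hfδ : ∀ᶠ x in cocompact X, δ ≤ f x) : ∃ ε > 0, ∀ x, ε ≤ f x := by
  obtain ⟨x₀, hx₀⟩ := (hf.min continuous_const).exists_forall_le' (Classical.arbitrary X)
    (hfδ.mono fun x hx => by rw [min_eq_right hx]; exact min_le_right _ _)
  exact ⟨min (f x₀) δ, lt_min (hpos x₀) hδ, fun x => (hx₀ x).trans (min_le_left _ _)⟩

theorem stmt_13_general (A S : ℝ → ℝ)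
    (hAcont : Continuous A) (hApos : ∀ x, 0 < A x)
    (hAdecay : Tendsto A (cocompact ℝ) (𝓝 0))
    (hS'cont : Continuous (deriv S)) (lam : ℂ) :
    ¬(∃ ε : ℝ, 0 < ε ∧ ∀ x ξ : ℝ,
        ε ≤ ‖(-(ξ : ℂ)^2 + ((deriv S x / 2 : ℝ) + lam)^2 + ((A x : ℝ) : ℂ)^2)‖)
      ↔ (lam.im = 0 ∨ (lam.im ≠ 0 ∧ ∃ x₀ : ℝ,
          lam.re = -(deriv S x₀) / 2 ∧ |lam.im| ≤ A x₀)) := by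
  change ¬(∃ ε : ℝ, 0 < ε ∧ ∀ x ξ, ε ≤ ‖symbolDet (deriv S x / 2) (A x) lam ξ‖) ↔ _
  constructor
  · intro hno
    by_contra! ⟨hb, hA⟩
    refine hno ?_
    have hsmall : ∀ᶠ x in cocompact ℝ, |A x| < |lam.im| / 2 := by
      simpa using hAdecay (Metric.ball_mem_nhds 0 (by positivity : 0 < |lam.im| / 2))
    obtain ⟨ε, hε, hbound⟩ := Continuous.exists_pos_le_of_eventually_cocompact
      (f := fun x => symbolDetLowerBound (deriv S x / 2) (A x) lam)
      (by unfold symbolDetLowerBound; fun_prop)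
      (fun x => symbolDetLowerBound_pos hb fun hc =>
        (abs_of_pos (hApos x)).trans_lt (hA hb x (by linarith)))
      (by positivity) (hsmall.mono fun x => half_sq_im_le_symbolDetLowerBound)
    exact ⟨ε, hε, fun x ξ => (hbound x).trans (symbolDetLowerBound_le_norm _ _ _ ξ)⟩
  · rintro h ⟨ε, hε, hbound⟩
    obtain ⟨x, him, hre⟩ : ∃ x, (deriv S x / 2 + lam.re) * lam.im = 0 ∧
        lam.im ^ 2 ≤ (deriv S x / 2 + lam.re) ^ 2 + A x ^ 2 := by
      rcases h with hb | ⟨-, x₀, hre, hA⟩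
      · exact ⟨0, by simp [hb], by simp [hb]; positivity⟩
      · have hc : deriv S x₀ / 2 + lam.re = 0 := by rw [hre]; ring
        refine ⟨x₀, by simp [hc], ?_⟩
        rw [hc, zero_pow two_ne_zero, zero_add]
        exact sq_le_sq.mpr (hA.trans (le_abs_self _))
    obtain ⟨ξ, hξ⟩ := exists_symbolDet_eq_zero him hre
    have := hbound x ξ
    rw [hξ, norm_zero] at this
    linarith

theorem stmt_13 (A S : ℝ → ℝ)
    (hAcont : Continuous A) (hApos : ∀ x, 0 < A x)
    (hAdecay : Tendsto A (cocompact ℝ) (𝓝 0))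
    (hS'cont : Continuous (deriv S)) (MS : ℝ) (hMS : ∀ x, |deriv S x| ≤ MS) (lam : ℂ) :
    ¬(∃ ε : ℝ, 0 < ε ∧ ∀ x ξ : ℝ,
        ε ≤ ‖(-(ξ : ℂ)^2 + ((deriv S x / 2 : ℝ) + lam)^2 + ((A x : ℝ) : ℂ)^2)‖)
      ↔ (lam.im = 0 ∨ (lam.im ≠ 0 ∧ ∃ x₀ : ℝ,
          lam.re = -(deriv S x₀) / 2 ∧ |lam.im| ≤ A x₀)) :=
  stmt_13_general A S hAcont hApos hAdecay hS'cont lam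
end

section
/- λ ∈ ℂ is an eigenvalue of the matrix p(x,ξ) for some (x,ξ) ∈ ℝ² if and only if either (Im λ = 0 and ξ² = (S'(x)/2 + Re λ)² + A(x)²) or (S'(x)/2 + Re λ = 0 and ξ² = A(x)² − (Im λ)²). -/
/-!
The characteristic polynomial is `det (p - λ) = (S'/2 + λ)² - (ξ² - A²)`, so `λ` is an eigenvalue
iff `S'/2 + λ` squares to the real number `ξ² - A²`, i.e. iff `S'/2 + λ` is real or purely
imaginary with the corresponding square.
-/

open Complex Matrix

theorem Complex.sq_eq_ofReal_iff (z : ℂ) (r : ℝ) :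
    z ^ 2 = r ↔ (z.im = 0 ∧ z.re ^ 2 = r) ∨ (z.re = 0 ∧ -z.im ^ 2 = r) := by
  have hre : (z ^ 2).re = z.re ^ 2 - z.im ^ 2 := by simp [sq]
  have him : (z ^ 2).im = 2 * z.re * z.im := by simp [sq]; ring
  rw [Complex.ext_iff, hre, him, ofReal_re, ofReal_im]
  constructor
  · rintro ⟨hr, hi⟩
    rcases mul_eq_zero.1 (by linarith : z.re * z.im = 0) with h | h
    · exact Or.inr ⟨h, by rw [← hr, h]; ring⟩
    · exact Or.inl ⟨h, by rw [← hr, h]; ring⟩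
  · rintro (⟨h, hr⟩ | ⟨h, hr⟩) <;> exact ⟨by rw [← hr, h]; ring, by rw [h]; ring⟩

theorem det_symbol_sub_smul_one (a s ξ : ℝ) (lam : ℂ) :
    (!![-(ξ : ℂ) - s / 2, -I * a; -I * a, (ξ : ℂ) - s / 2]
      - lam • (1 : Matrix (Fin 2) (Fin 2) ℂ)).det
      = ((s : ℂ) / 2 + lam) ^ 2 - ((ξ ^ 2 - a ^ 2 : ℝ) : ℂ) := by
  simp only [neg_mul, det_fin_two, Fin.isValue, Matrix.sub_apply, of_apply, cons_val',
    cons_val_zero, cons_val_fin_one, Matrix.smul_apply, one_apply_eq, smul_eq_mul, mul_one,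
    cons_val_one, ne_eq, zero_ne_one, not_false_eq_true, one_apply_ne, mul_zero, sub_zero,
    one_ne_zero, mul_neg, neg_neg, ofReal_sub, ofReal_pow]
  linear_combination (-(a : ℂ) ^ 2) * I_sq

theorem stmt_14 (A S : ℝ → ℝ) (lam : ℂ) (x ξ : ℝ) :
    (!![-(ξ : ℂ) - (deriv S x) / 2, -Complex.I * A x;
        -Complex.I * A x, (ξ : ℂ) - (deriv S x) / 2]
      - lam • (1 : Matrix (Fin 2) (Fin 2) ℂ)).det = 0
    ↔ ((lam.im = 0 ∧ ξ^2 = (deriv S x / 2 + lam.re)^2 + (A x)^2)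
        ∨ (deriv S x / 2 + lam.re = 0 ∧ ξ^2 = (A x)^2 - lam.im^2)) := by
  rw [det_symbol_sub_smul_one, sub_eq_zero, Complex.sq_eq_ofReal_iff]
  have hre : (((deriv S x : ℝ) : ℂ) / 2 + lam).re = deriv S x / 2 + lam.re := by simp
  have him : (((deriv S x : ℝ) : ℂ) / 2 + lam).im = lam.im := by simp
  rw [hre, him]
  refine or_congr ?_ ?_ <;>
    exact and_congr_right fun _ => ⟨fun h => by linarith, fun h => by linarith⟩
end

section
/- Suppose S' is bounded and A is bounded. If Im λ ≠ 0 then there exists R > 0 such that for all (x,ξ) with |ξ| ≥ R and all u ∈ ℂ², |(p(x,ξ) − λI)u|² ≥ R|u|². -/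
open Complex Matrix

private lemma half_bound (a b : ℂ) :
    Complex.normSq a / 2 - Complex.normSq b ≤ Complex.normSq (a + b) := by
  simp only [Complex.normSq_apply, Complex.add_re, Complex.add_im]
  nlinarith [sq_nonneg (a.re + 2 * b.re), sq_nonneg (a.im + 2 * b.im)]

private lemma core (z0 z1 w u0 u1 : ℂ) (R MA2 : ℝ)
    (hw : Complex.normSq w ≤ MA2)
    (h0 : R + MA2 ≤ Complex.normSq z0 / 2)
    (h1 : R + MA2 ≤ Complex.normSq z1 / 2) :
    R * (Complex.normSq u0 + Complex.normSq u1)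
      ≤ Complex.normSq (z0 * u0 + w * u1) + Complex.normSq (w * u0 + z1 * u1) := by
  have k0 := half_bound (z0 * u0) (w * u1)
  have k1 := half_bound (z1 * u1) (w * u0)
  rw [add_comm (z1 * u1)] at k1
  rw [Complex.normSq_mul, Complex.normSq_mul] at k0 k1
  have n0 := Complex.normSq_nonneg u0
  have n1 := Complex.normSq_nonneg u1
  nlinarith [mul_le_mul_of_nonneg_right h0 n0, mul_le_mul_of_nonneg_right h1 n1,
    mul_le_mul_of_nonneg_right hw n0, mul_le_mul_of_nonneg_right hw n1]

theorem stmt_17 (A : ℝ → ℝ) (S' : ℝ → ℝ) (hApos : ∀ x, 0 < A x)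
    (MA : ℝ) (hMA : ∀ x, |A x| ≤ MA)
    (MS : ℝ) (hMS : ∀ x, |S' x| ≤ MS)
    (lam : ℂ) (him : lam.im ≠ 0) :
    ∃ R : ℝ, 0 < R ∧ ∀ x ξ : ℝ, R ≤ |ξ| → ∀ u : Fin 2 → ℂ,
      R * (Complex.normSq (u 0) + Complex.normSq (u 1))
        ≤ Complex.normSq
            (((!![-(ξ : ℂ) - (S' x) / 2, -Complex.I * A x;
                  -Complex.I * A x, (ξ : ℂ) - (S' x) / 2]
               - lam • (1 : Matrix (Fin 2) (Fin 2) ℂ)).mulVec u) 0)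
          + Complex.normSq
            (((!![-(ξ : ℂ) - (S' x) / 2, -Complex.I * A x;
                  -Complex.I * A x, (ξ : ℂ) - (S' x) / 2]
               - lam • (1 : Matrix (Fin 2) (Fin 2) ℂ)).mulVec u) 1) := by
  have hMA0 : 0 ≤ MA := le_trans (abs_nonneg _) (hMA 0)
  have hMS0 : 0 ≤ MS := le_trans (abs_nonneg _) (hMS 0)
  obtain ⟨C, hC, hC0⟩ : ∃ C, C = MS / 2 + |lam.re| ∧ 0 ≤ C := ⟨_, rfl, by positivity⟩
  obtain ⟨D, hD, hD3⟩ : ∃ D, D = C + 2 * MA ^ 2 + 3 ∧ 3 ≤ D := ⟨_, rfl, by nlinarith⟩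
  refine ⟨2 * D ^ 2, by positivity, ?_⟩
  intro x ξ hξ u
  have habs := abs_le.mp (hMS x)
  have hl1 := le_abs_self lam.re
  have hl2 := neg_abs_le lam.re
  have hξC : C ≤ |ξ| := by nlinarith
  have h0 : ((!![-(ξ : ℂ) - (S' x) / 2, -Complex.I * A x;
                  -Complex.I * A x, (ξ : ℂ) - (S' x) / 2]
               - lam • (1 : Matrix (Fin 2) (Fin 2) ℂ)).mulVec u) 0
      = (-(ξ : ℂ) - (S' x) / 2 - lam) * u 0 + (-Complex.I * A x) * u 1 := by
    simp [Matrix.mulVec, dotProduct, Fin.sum_univ_two, Matrix.sub_apply,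
      Matrix.smul_apply, Matrix.one_apply]
  have h1 : ((!![-(ξ : ℂ) - (S' x) / 2, -Complex.I * A x;
                  -Complex.I * A x, (ξ : ℂ) - (S' x) / 2]
               - lam • (1 : Matrix (Fin 2) (Fin 2) ℂ)).mulVec u) 1
      = (-Complex.I * A x) * u 0 + ((ξ : ℂ) - (S' x) / 2 - lam) * u 1 := by
    simp [Matrix.mulVec, dotProduct, Fin.sum_univ_two, Matrix.sub_apply,
      Matrix.smul_apply, Matrix.one_apply]
  rw [h0, h1]
  apply core (MA2 := MA ^ 2)
  · have : Complex.normSq (-Complex.I * (A x : ℂ)) = (A x) ^ 2 := by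
      simp [Complex.normSq_apply]; ring
    rw [this]
    calc (A x) ^ 2 = |A x| ^ 2 := (_root_.sq_abs _).symm
    _ ≤ MA ^ 2 := by nlinarith [hMA x, abs_nonneg (A x)]
  · -- normSq z0 bound
    have hre : (-(ξ : ℂ) - (S' x) / 2 - lam).re = -ξ - S' x / 2 - lam.re := by simp
    have hlow : (|ξ| - C) ^ 2 ≤ Complex.normSq (-(ξ : ℂ) - (S' x) / 2 - lam) := by
      have h2 : |ξ| - C ≤ |(-(ξ : ℂ) - (S' x) / 2 - lam).re| := by
        rw [hre]
        rcases abs_cases ξ with ⟨h, h'⟩ | ⟨h, h'⟩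
        · have := neg_abs_le (-ξ - S' x / 2 - lam.re); linarith
        · have := le_abs_self (-ξ - S' x / 2 - lam.re); linarith
      calc (|ξ| - C) ^ 2 ≤ |(-(ξ : ℂ) - (S' x) / 2 - lam).re| ^ 2 := by
            apply pow_le_pow_left₀ (by linarith) h2
      _ = (-(ξ : ℂ) - (S' x) / 2 - lam).re ^ 2 := _root_.sq_abs _
      _ ≤ _ := by rw [Complex.normSq_apply]; nlinarith [sq_nonneg (-(ξ : ℂ) - (S' x) / 2 - lam).im]
    have hmain : 2 * D ^ 2 + MA ^ 2 ≤ (|ξ| - C) ^ 2 / 2 := by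
      have h2 : D ^ 2 ≤ |ξ| - C := by nlinarith
      nlinarith [sq_nonneg (D ^ 2 - 2 * D), sq_nonneg D]
    linarith
  · -- normSq z1 bound
    have hre : ((ξ : ℂ) - (S' x) / 2 - lam).re = ξ - S' x / 2 - lam.re := by simp
    have hlow : (|ξ| - C) ^ 2 ≤ Complex.normSq ((ξ : ℂ) - (S' x) / 2 - lam) := by
      have h2 : |ξ| - C ≤ |((ξ : ℂ) - (S' x) / 2 - lam).re| := by
        rw [hre]
        rcases abs_cases ξ with ⟨h, h'⟩ | ⟨h, h'⟩
        · have := le_abs_self (ξ - S' x / 2 - lam.re); linarith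
        · have := neg_abs_le (ξ - S' x / 2 - lam.re); linarith
      calc (|ξ| - C) ^ 2 ≤ |((ξ : ℂ) - (S' x) / 2 - lam).re| ^ 2 := by
            apply pow_le_pow_left₀ (by linarith) h2
      _ = ((ξ : ℂ) - (S' x) / 2 - lam).re ^ 2 := _root_.sq_abs _
      _ ≤ _ := by rw [Complex.normSq_apply]; nlinarith [sq_nonneg ((ξ : ℂ) - (S' x) / 2 - lam).im]
    have hmain : 2 * D ^ 2 + MA ^ 2 ≤ (|ξ| - C) ^ 2 / 2 := by
      have h2 : D ^ 2 ≤ |ξ| - C := by nlinarith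
      nlinarith [sq_nonneg (D ^ 2 - 2 * D), sq_nonneg D]
    linarith
end
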